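/- arXiv:1006.1464 — 10 statements merged into one kernel-verified Lean document; each statement's English description precedes it below -/
import Mathlib

section
/- Let c_1, c_2, ... be indeterminates and define formal power series C = 1 + c_1 + c_2 + ... (with c_i of degree i) and \bar{C} = 1 + \bar{c}_1 + \bar{c}_2 + ... determined by the relation C\bar{C} = 1, so that each \bar{c}_i is a polynomial in c_1,...,c_i. Then for all positive integers i, j and all l ≥ 0 (with j ≤ i), the partial derivatives satisfy ∂\bar{c}_i/∂c_j = ∂\bar{c}_{i+l}/∂c_{j+l}. -/
open MvPolynomial

/-- The components `c̄ₙ` of the inverse of `C = 1 + c₁ + c₂ + ⋯`, defined by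
`c̄₀ = 1` and `c̄ₙ = -(c₁c̄_{n-1} + c₂c̄_{n-2} + ⋯ + cₙc̄₀)`, as polynomials in the
independent variables `cᵢ = X i` (`i ≥ 1`). -/
noncomputable def cbar : ℕ → MvPolynomial ℕ ℚ
  | 0 => 1
  | (n + 1) => -∑ j ∈ Finset.range (n + 1), X (j + 1) * cbar (n - j)
  decreasing_by omega

/-! Differentiating the recursion for `c̄_{n+1}` with respect to `c_{j+1}` term by term reproduces,
after shifting all indices down by one, the derivative of the recursion for `c̄ₙ` with respect
to `cⱼ`; the extra terms involve `∂c₁/∂c_{j+1}` and `∂c̄₀/∂c_{j+1}`, which vanish. By strong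
induction `∂c̄_{n+1}/∂c_{j+1} = ∂c̄ₙ/∂cⱼ`, and iterating this shift gives the theorem. -/

theorem cbar_zero : cbar 0 = 1 := by
  rw [cbar]

theorem cbar_succ (n : ℕ) :
    cbar (n + 1) = -∑ j ∈ Finset.range (n + 1), X (j + 1) * cbar (n - j) := by
  rw [cbar]

theorem pderiv_X_succ_succ {R : Type*} [CommSemiring R] (i j : ℕ) :
    pderiv (j + 1) (X (i + 1) : MvPolynomial ℕ R) = pderiv j (X i) := by
  simp only [pderiv_X, Pi.single_apply, add_left_inj]

theorem pderiv_cbar_succ_succ {n j : ℕ} (hj : 1 ≤ j) :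
    pderiv (j + 1) (cbar (n + 1)) = pderiv j (cbar n) := by
  induction n using Nat.strong_induction_on with
  | _ n ih =>
  cases n with
  | zero =>
    simp [cbar_succ, cbar_zero, pderiv_X, Nat.one_le_iff_ne_zero.mp hj]
  | succ m =>
    have hX : ∑ t ∈ Finset.range (m + 2), pderiv (j + 1) (X (t + 1)) * cbar (m + 1 - t) =
        ∑ t ∈ Finset.range (m + 1), pderiv j (X (t + 1)) * cbar (m - t) := by
      rw [Finset.sum_range_succ', pderiv_X_of_ne (by omega), zero_mul, add_zero]
      refine Finset.sum_congr rfl fun t _ => ?_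
      rw [pderiv_X_succ_succ, Nat.add_sub_add_right]
    have hC : ∑ t ∈ Finset.range (m + 2), X (t + 1) * pderiv (j + 1) (cbar (m + 1 - t)) =
        ∑ t ∈ Finset.range (m + 1), X (t + 1) * pderiv j (cbar (m - t)) := by
      rw [Finset.sum_range_succ, Nat.sub_self, cbar_zero, Derivation.map_one_eq_zero, mul_zero, add_zero]
      refine Finset.sum_congr rfl fun t ht => ?_
      have ht : t ≤ m := Finset.mem_range_succ_iff.mp ht
      rw [Nat.sub_add_comm ht, ih (m - t) (by omega)]
    simp only [cbar_succ m, cbar_succ (m + 1), map_neg, map_sum, pderiv_mul,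
      Finset.sum_add_distrib, hX, hC]

theorem pderiv_cbar_shift_general (i j l : ℕ) (hj : 1 ≤ j) :
    pderiv j (cbar i) = pderiv (j + l) (cbar (i + l)) := by
  induction l with
  | zero => rfl
  | succ l ih => rw [← add_assoc, ← add_assoc, pderiv_cbar_succ_succ (le_add_right hj), ih]

/-- for all `1 ≤ j ≤ i` and `l ≥ 0`,
`∂c̄ᵢ/∂cⱼ = ∂c̄_{i+l}/∂c_{j+l}`. -/
theorem pderiv_cbar_shift (i j l : ℕ) (hj : 1 ≤ j) (hji : j ≤ i) :
    pderiv j (cbar i) = pderiv (j + l) (cbar (i + l)) :=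
  pderiv_cbar_shift_general i j l hj
end

section
/- In the polynomial ring ℤ[c_1, c_2], the ideal generated by the two polynomials \bar{c}_4 and \bar{c}_5 (the degree-4 and degree-5 components of the inverse series of 1 + c_1 + c_2) equals the ideal generated by the two partial derivatives ∂V/∂c_1 and ∂V/∂c_2 of the potential V = -c_1^6/6 + c_1^4 c_2 - (3/2) c_1^2 c_2^2 + c_2^3/3, after clearing denominators (i.e., over ℚ the Jacobi ideal of V equals the ideal (\bar{c}_4, \bar{c}_5)). -/
/-!
In Chern roots `c₁ = x + y`, `c₂ = x y` the potential is `V = -(x⁶ + y⁶)/6`, and the two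
generating pairs coincide on the nose: `∂V/∂c₁ = c̄₅` and `∂V/∂c₂ = c̄₄`.
-/

open MvPolynomial

theorem MvPolynomial.C_mul_ofNat {R σ : Type*} [CommSemiring R] (r : R) (n : ℕ) [n.AtLeastTwo] :
    (C r : MvPolynomial σ R) * ofNat(n) = C (r * ofNat(n)) := by
  rw [C_mul, map_ofNat]

noncomputable def gepnerPotential : MvPolynomial (Fin 2) ℚ :=
  -(C (1/6 : ℚ)) * X 0 ^ 6 + X 0 ^ 4 * X 1 - C (3/2 : ℚ) * X 0 ^ 2 * X 1 ^ 2
    + C (1/3 : ℚ) * X 1 ^ 3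

theorem pderiv_zero_gepnerPotential :
    pderiv 0 gepnerPotential = -X 0 ^ 5 + 4 * X 0 ^ 3 * X 1 - 3 * X 0 * X 1 ^ 2 := by
  have h6 : (C (1/6) : MvPolynomial (Fin 2) ℚ) * 6 = 1 := by norm_num [C_mul_ofNat, map_ofNat]
  have h2 : (C (3/2) : MvPolynomial (Fin 2) ℚ) * 2 = 3 := by norm_num [C_mul_ofNat, map_ofNat]
  simp only [gepnerPotential, map_add, map_sub, map_neg, Derivation.leibniz,
    Derivation.leibniz_pow, pderiv_X_self, pderiv_X_of_ne (show (1 : Fin 2) ≠ 0 by decide),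
    pderiv_C, smul_eq_mul, nsmul_eq_mul, Nat.cast_ofNat]
  linear_combination -X 0 ^ 5 * h6 - X 0 * X 1 ^ 2 * h2

theorem pderiv_one_gepnerPotential :
    pderiv 1 gepnerPotential = X 0 ^ 4 - 3 * X 0 ^ 2 * X 1 + X 1 ^ 2 := by
  have h2 : (C (3/2) : MvPolynomial (Fin 2) ℚ) * 2 = 3 := by norm_num [C_mul_ofNat, map_ofNat]
  have h3 : (C (1/3) : MvPolynomial (Fin 2) ℚ) * 3 = 1 := by norm_num [C_mul_ofNat, map_ofNat]
  simp only [gepnerPotential, map_add, map_sub, map_neg, Derivation.leibniz,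
    Derivation.leibniz_pow, pderiv_X_self, pderiv_X_of_ne (show (0 : Fin 2) ≠ 1 by decide),
    pderiv_C, smul_eq_mul, nsmul_eq_mul, Nat.cast_ofNat]
  linear_combination -X 0 ^ 2 * X 1 * h2 + X 1 ^ 2 * h3

/-- In ℚ[c₁,c₂], the Jacobi ideal of the Gepner potential
`V = -c₁⁶/6 + c₁⁴c₂ - (3/2)c₁²c₂² + c₂³/3` equals the ideal generated by
the degree-4 and degree-5 components `c̄₄, c̄₅` of the inverse series of `1 + c₁ + c₂`.
Here `c₁ = X 0`, `c₂ = X 1`. -/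
theorem gepner_potential_Gr25 :
    let c1 : MvPolynomial (Fin 2) ℚ := X 0
    let c2 : MvPolynomial (Fin 2) ℚ := X 1
    let cbar4 : MvPolynomial (Fin 2) ℚ := c1 ^ 4 - 3 * c1 ^ 2 * c2 + c2 ^ 2
    let cbar5 : MvPolynomial (Fin 2) ℚ := -c1 ^ 5 + 4 * c1 ^ 3 * c2 - 3 * c1 * c2 ^ 2
    let V : MvPolynomial (Fin 2) ℚ :=
      -(C (1/6 : ℚ)) * c1 ^ 6 + c1 ^ 4 * c2 - C (3/2 : ℚ) * c1 ^ 2 * c2 ^ 2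
        + C (1/3 : ℚ) * c2 ^ 3
    Ideal.span {pderiv 0 V, pderiv 1 V} = Ideal.span {cbar4, cbar5} := by
  intro c1 c2 cbar4 cbar5 V
  rw [show pderiv 0 V = cbar5 from pderiv_zero_gepnerPotential,
    show pderiv 1 V = cbar4 from pderiv_one_gepnerPotential, Set.pair_comm]
end

section
/- Let x_1, x_3, x_5, ... be independent variables and define x_2, x_4, x_6, ... recursively by the relations x_i^2 + 2Σ_{k≥1}(-1)^k x_{i+k}x_{i-k} + (-1)^i x_{2i} = 0 (with x_0 = 1 and x_j = 0 interpreted appropriately), equivalently by (X_+ + X_-)(X_+ - X_- - 1) = X_- where X_+ = 1 + x_2 + x_4 + ... and X_- = x_1 + x_3 + x_5 + .... Then for all n, m, k the partial derivative identity ∂x_{2(n+k)}/∂x_{2(m+k)+1} = ∂x_{2n}/∂x_{2m+1} holds. -/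
/-!
Put `E = ∑ x_{2i} t^{2i}` and `O = ∑ x_{2i+1} t^{2i+1}` in `ℚ[x₁, x₃, …]⟦t⟧`. The relations say
exactly that `E² - O² = E`. Differentiating coefficientwise with respect to `x_{2m+1}`, which sends
`O` to `t^{2m+1}`, gives `∂E · (2E - 1) = 2O · t^{2m+1}`, and `2E - 1` is invertible since
`x₀ = 1`. So `∂E/∂x_{2m+1} = t^{2m+1} · 2O(2E - 1)⁻¹`, and `∂x_{2n}/∂x_{2m+1}` is the coefficient
of `t^{2n-2m-1}` in a series that depends on neither `n` nor `m`.
-/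

open MvPolynomial

namespace Derivation

open PowerSeries

variable {S R : Type*} [CommRing S] [CommRing R] [Algebra S R]

noncomputable def mapCoeffsPowerSeries (d : Derivation S R R) : Derivation S R⟦X⟧ R⟦X⟧ :=
  Derivation.mk'
    { toFun := fun f => PowerSeries.mk fun n => d (coeff n f)
      map_add' := fun f g => by ext n; simp
      map_smul' := fun s f => by ext n; simp }
    fun f g => by
      ext n
      rw [smul_eq_mul, smul_eq_mul, mul_comm g]
      simp only [LinearMap.coe_mk, AddHom.coe_mk, coeff_mk, map_add, PowerSeries.coeff_mul,
        map_sum, leibniz, smul_eq_mul, Finset.sum_add_distrib]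
      exact congrArg _ (Finset.sum_congr rfl fun _ _ => mul_comm _ _)

@[simp]
theorem coeff_mapCoeffsPowerSeries (d : Derivation S R R) (f : R⟦X⟧) (n : ℕ) :
    coeff n (d.mapCoeffsPowerSeries f) = d (coeff n f) :=
  coeff_mk n fun n => d (coeff n f)

theorem apply_eq_of_mul_self_sub_mul_self_eq (D : Derivation S R R) {e o v : R}
    (h : e * e - o * o = e) (hv : (2 * e - 1) * v = 1) :
    D e = 2 * o * v * D o := by
  have hD : D e * (2 * e - 1) = 2 * o * D o := by
    have := congrArg D h
    rw [map_sub, leibniz, leibniz, smul_eq_mul, smul_eq_mul] at this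
    linear_combination this
  calc D e = D e * (2 * e - 1) * v := by rw [mul_assoc, hv, mul_one]
    _ = 2 * o * v * D o := by rw [hD]; ring

end Derivation

namespace Finset

theorem sum_range_two_mul_add_one_of_symm {M : Type*} [AddCommMonoid M] (g : ℕ → M) (i : ℕ)
    (hg : ∀ a ≤ 2 * i, g (2 * i - a) = g a) :
    ∑ a ∈ range (2 * i + 1), g a = g i + 2 • ∑ k ∈ range i, g (i + 1 + k) := by
  have hlow : ∑ a ∈ range i, g a = ∑ k ∈ range i, g (i + 1 + k) := by
    rw [← sum_range_reflect]
    refine sum_congr rfl fun k hk => ?_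
    have hk : k < i := mem_range.mp hk
    rw [← hg _ (by omega), show 2 * i - (i - 1 - k) = i + 1 + k by omega]
  rw [show 2 * i + 1 = (i + 1) + i by omega, sum_range_add, sum_range_succ, hlow, two_nsmul]
  abel

end Finset

namespace PowerSeries

variable {R : Type*} [CommRing R]

noncomputable def mkEven (x : ℕ → R) : R⟦X⟧ := mk fun n => if Even n then x n else 0

noncomputable def mkOdd (x : ℕ → R) : R⟦X⟧ := mk fun n => if Odd n then x n else 0

theorem coeff_mkEven_mul_self_sub_mkOdd_mul_self (x : ℕ → R) (N : ℕ) :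
    coeff N (mkEven x * mkEven x - mkOdd x * mkOdd x)
      = if Even N then ∑ a ∈ Finset.range (N + 1), (-1) ^ a * (x a * x (N - a)) else 0 := by
  rw [map_sub, PowerSeries.coeff_mul, PowerSeries.coeff_mul, ← Finset.sum_sub_distrib,
    Finset.Nat.sum_antidiagonal_eq_sum_range_succ_mk, ← Finset.sum_const_zero,
    ← Finset.sum_ite_irrel]
  refine Finset.sum_congr rfl fun a ha => ?_
  have hpar : Even (N - a) ↔ (Even N ↔ Even a) :=
    Nat.even_sub (Nat.lt_succ_iff.mp (Finset.mem_range.mp ha))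
  simp only [mkEven, mkOdd, coeff_mk, ← Nat.not_even_iff_odd]
  by_cases hN : Even N <;> by_cases ha : Even a <;> simp [hN, ha, hpar, neg_one_pow_eq_ite]

theorem mkEven_mul_self_sub_mkOdd_mul_self_eq {x : ℕ → R}
    (hx : ∀ i, ∑ a ∈ Finset.range (2 * i + 1), (-1) ^ a * (x a * x (2 * i - a)) = x (2 * i)) :
    mkEven x * mkEven x - mkOdd x * mkOdd x = mkEven x := by
  ext N
  rw [coeff_mkEven_mul_self_sub_mkOdd_mul_self, mkEven, coeff_mk]
  split_ifs with hN
  · obtain ⟨i, rfl⟩ := hN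
    rw [← two_mul, hx]
  · rfl

theorem isUnit_two_mul_mkEven_sub_one {x : ℕ → R} (h0 : x 0 = 1) :
    IsUnit (2 * mkEven x - 1) := by
  have hE : constantCoeff (mkEven x) = 1 := by
    simp [mkEven, ← coeff_zero_eq_constantCoeff_apply, h0]
  rw [isUnit_iff_constantCoeff, map_sub, map_mul, hE, map_ofNat, map_one]
  norm_num

end PowerSeries

open PowerSeries in
theorem pderiv_mapCoeffsPowerSeries_mkOdd {R : Type*} [CommRing R] {x : ℕ → MvPolynomial ℕ R}
    (hodd : ∀ m, x (2 * m + 1) = X m) (m : ℕ) :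
    (pderiv m).mapCoeffsPowerSeries (mkOdd x) = PowerSeries.X ^ (2 * m + 1) := by
  ext n
  rw [Derivation.coeff_mapCoeffsPowerSeries, mkOdd, coeff_mk, PowerSeries.coeff_X_pow]
  split_ifs with hn hnm hnm
  · subst hnm; rw [hodd, pderiv_X_self]
  · obtain ⟨j, rfl⟩ := hn
    rw [hodd, pderiv_X_of_ne (by omega)]
  · exact absurd ⟨m, hnm⟩ hn
  · rw [map_zero]

theorem sum_alternating_eq_of_OGr_rel {R : Type*} [CommRing R] {x : ℕ → R} (h0 : x 0 = 1)
    (hrel : ∀ i, 1 ≤ i →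
      (x i) ^ 2
        + 2 * ∑ k ∈ Finset.range (i - 1), (-1 : R) ^ (k + 1) * (x (i + (k + 1)) * x (i - (k + 1)))
        + (-1 : R) ^ i * x (2 * i) = 0) (i : ℕ) :
    ∑ a ∈ Finset.range (2 * i + 1), (-1) ^ a * (x a * x (2 * i - a)) = x (2 * i) := by
  obtain rfl | ⟨j, rfl⟩ : i = 0 ∨ ∃ j, i = j + 1 := by cases i <;> simp
  · simp [h0]
  set g : ℕ → R := fun a => (-1) ^ a * (x a * x (2 * (j + 1) - a))
  have hsymm : ∀ a ≤ 2 * (j + 1), g (2 * (j + 1) - a) = g a := by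
    intro a ha
    simp only [g, Nat.sub_sub_self ha]
    rw [neg_one_pow_eq_pow_mod_two, neg_one_pow_eq_pow_mod_two (n := a),
      show (2 * (j + 1) - a) % 2 = a % 2 by omega, mul_comm (x _)]
  have hpair : ∀ k, g (j + 1 + 1 + k) =
      (-1) ^ (j + 1) * ((-1) ^ (k + 1) * (x (j + 1 + (k + 1)) * x (j + 1 - (k + 1)))) := by
    intro k
    simp only [g]
    rw [show j + 1 + 1 + k = j + 1 + (k + 1) by omega,
      show 2 * (j + 1) - (j + 1 + (k + 1)) = j + 1 - (k + 1) by omega, pow_add]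
    ring
  have hsign : ((-1 : R) ^ (j + 1)) ^ 2 = 1 := by
    rw [← pow_mul, pow_mul', neg_one_sq, one_pow]
  -- the end terms `a = 0, 2i` give `2 x_{2i}`, the rest is `(-1)^i` times the relation at `i`
  rw [Finset.sum_range_two_mul_add_one_of_symm g _ hsymm, Finset.sum_range_succ, nsmul_eq_mul]
  simp only [hpair, ← Finset.mul_sum]
  have hrel' := hrel (j + 1) (by omega)
  rw [Nat.add_sub_cancel] at hrel'
  simp only [g, Nat.cast_ofNat, Nat.sub_self, h0, mul_one, ← two_mul]
  rw [show 2 * (j + 1) - (j + 1) = j + 1 by omega]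
  linear_combination (-1 : R) ^ (j + 1) * hrel' + x (2 * (j + 1)) * hsign

/-- let `x 0 = 1`, let the odd-indexed `x (2m+1) = X m` be
independent variables, and let the even-indexed `x (2i)` be the polynomials in
the odd variables determined by the relations
`xᵢ² + 2∑_{k=1}^{i-1} (-1)^k x_{i+k} x_{i-k} + (-1)^i x_{2i} = 0` (for `i ≥ 1`).
Then `∂x_{2(n+k)}/∂x_{2(m+k)+1} = ∂x_{2n}/∂x_{2m+1}` for all `n, m, k`. -/
theorem OGr_pderiv_shift (x : ℕ → MvPolynomial ℕ ℚ)
    (h0 : x 0 = 1)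
    (hodd : ∀ m, x (2 * m + 1) = X m)
    (hrel : ∀ i, 1 ≤ i →
      (x i) ^ 2
        + 2 * ∑ k ∈ Finset.range (i - 1), (-1 : MvPolynomial ℕ ℚ) ^ (k + 1)
            * (x (i + (k + 1)) * x (i - (k + 1)))
        + (-1 : MvPolynomial ℕ ℚ) ^ i * x (2 * i) = 0) :
    ∀ n m k : ℕ, pderiv (m + k) (x (2 * (n + k))) = pderiv m (x (2 * n)) := by
  have hEO :=
    PowerSeries.mkEven_mul_self_sub_mkOdd_mul_self_eq (sum_alternating_eq_of_OGr_rel h0 hrel)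
  obtain ⟨v, hv⟩ := (PowerSeries.isUnit_two_mul_mkEven_sub_one h0).exists_right_inv
  have hpderiv : ∀ n m, pderiv m (x (2 * n)) =
      if 2 * m + 1 ≤ 2 * n then
        PowerSeries.coeff (2 * n - (2 * m + 1)) (2 * PowerSeries.mkOdd x * v) else 0 := by
    intro n m
    have hE := (pderiv m).mapCoeffsPowerSeries.apply_eq_of_mul_self_sub_mul_self_eq hEO hv
    rw [pderiv_mapCoeffsPowerSeries_mkOdd hodd] at hE
    rw [← PowerSeries.coeff_mul_X_pow', ← hE, Derivation.coeff_mapCoeffsPowerSeries,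
      PowerSeries.mkEven, PowerSeries.coeff_mk, if_pos (even_two_mul n)]
  intro n m k
  rw [hpderiv, hpderiv, show 2 * (n + k) - (2 * (m + k) + 1) = 2 * n - (2 * m + 1) by omega]
  exact if_congr (by omega) rfl rfl
end

section
/- For n odd, in the polynomial ring ℚ[h, l] with potential V(h,l) = -h^n l + h l^2 + (n/(2(2n-1))) h^{2n-1}, one has ∂V/∂l = -(h^n - 2hl) and ∂V/∂h = l^2 + (n/2) h^{n-2}(h^n - 2hl); consequently the Jacobi ideal (∂V/∂h, ∂V/∂l) equals the ideal (h^n - 2hl, l^2). -/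
/-!
Differentiating gives `∂V/∂l = -(hⁿ - 2hl)` and `∂V/∂h = l² + (n/2)h^{n-2}(hⁿ - 2hl)`, the
coefficient of `h^{2n-1}` being chosen so that the `h^{2n-2}` term of `∂V/∂h` is `(n/2)h^{n-2}·hⁿ`.
So the Jacobi generators arise from `(hⁿ - 2hl, l²)` by a triangular change with unit diagonal,
which does not change the ideal they span.
-/

open MvPolynomial

noncomputable def quadricPotential (R : Type*) [CommRing R] (n : ℕ) (c : R) :
    MvPolynomial (Fin 2) R :=
  -(X 0 ^ n * X 1) + X 0 * X 1 ^ 2 + C c * X 0 ^ (2 * n - 1)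

theorem pderiv_one_quadricPotential {R : Type*} [CommRing R] (n : ℕ) (c : R) :
    pderiv 1 (quadricPotential R n c) = -(X 0 ^ n - 2 * X 0 * X 1) := by
  simp only [quadricPotential, map_add, map_neg, Derivation.leibniz, pderiv_pow, pderiv_X,
    pderiv_C, Pi.single_eq_same, Pi.single_eq_of_ne (by decide : (0 : Fin 2) ≠ 1),
    smul_eq_mul, mul_zero, add_zero, mul_one]
  ring

/-- The coefficients `a`, `c` are meant as `n / 2` and `n / (2(2n - 1))`; the hypotheses
express this without division. -/
theorem pderiv_zero_quadricPotential {R : Type*} [CommRing R] {n : ℕ} (hn : 2 ≤ n)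
    {a c : R} (hc : c * (2 * n - 1) = a) (ha : (n : R) = 2 * a) :
    pderiv 0 (quadricPotential R n c) =
      X 1 ^ 2 + C a * X 0 ^ (n - 2) * (X 0 ^ n - 2 * X 0 * X 1) := by
  obtain ⟨k, rfl⟩ : ∃ k, n = k + 2 := ⟨n - 2, by omega⟩
  have hc' := congrArg (C (σ := Fin 2)) hc
  have ha' := congrArg (C (σ := Fin 2)) ha
  simp only [map_mul, map_sub, map_natCast, map_ofNat, map_one] at hc' ha'
  simp only [quadricPotential, map_add, map_neg, Derivation.leibniz, pderiv_pow, pderiv_X,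
    pderiv_C, Pi.single_eq_same, Pi.single_eq_of_ne (by decide : (1 : Fin 2) ≠ 0),
    smul_eq_mul, mul_zero, add_zero, mul_one]
  rw [show 2 * (k + 2) - 1 = 2 * k + 3 by omega, show 2 * k + 3 - 1 = 2 * k + 2 by omega,
    Nat.add_sub_cancel]
  push_cast at hc' ha' ⊢
  linear_combination X 0 ^ (2 * k + 2) * hc' - X 0 ^ (k + 1) * X 1 * ha'

theorem quadric_potential_odd_general (n : ℕ) (hn : 3 ≤ n) :
    let h : MvPolynomial (Fin 2) ℚ := X 0
    let l : MvPolynomial (Fin 2) ℚ := X 1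
    let V : MvPolynomial (Fin 2) ℚ :=
      -(h ^ n * l) + h * l ^ 2 + C ((n : ℚ) / (2 * (2 * n - 1))) * h ^ (2 * n - 1)
    pderiv 1 V = -(h ^ n - 2 * h * l) ∧
    pderiv 0 V = l ^ 2 + C ((n : ℚ) / 2) * h ^ (n - 2) * (h ^ n - 2 * h * l) ∧
    Ideal.span {pderiv 0 V, pderiv 1 V} = Ideal.span {h ^ n - 2 * h * l, l ^ 2} := by
  intro h l V
  have hV : V = quadricPotential ℚ n ((n : ℚ) / (2 * (2 * n - 1))) := rfl
  have h2n : (2 * n - 1 : ℚ) ≠ 0 := by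
    have : (3 : ℚ) ≤ n := by exact_mod_cast hn
    linarith
  have hd1 := pderiv_one_quadricPotential n ((n : ℚ) / (2 * (2 * n - 1)))
  have hd0 := pderiv_zero_quadricPotential (n := n) (by omega) (a := (n : ℚ) / 2)
    (c := (n : ℚ) / (2 * (2 * n - 1)))
    (by rw [← div_div, div_mul_cancel₀ _ h2n]) (by ring)
  rw [← hV] at hd0 hd1
  refine ⟨hd1, hd0, ?_⟩
  rw [hd0, hd1, Ideal.span_pair_neg, Ideal.span_pair_add_mul_right, Ideal.span_pair_comm]

/-- for odd `n`, the potential `V = -hⁿl + hl² + (n/(2(2n-1)))h^{2n-1}`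
in ℚ[h,l] (with `h = X 0`, `l = X 1`) satisfies
`∂V/∂l = -(hⁿ - 2hl)` and `∂V/∂h = l² + (n/2)h^{n-2}(hⁿ - 2hl)`, and its Jacobi
ideal equals `(hⁿ - 2hl, l²)`, the defining ideal of `H*(Q_{2n-2}, ℚ)`. -/
theorem quadric_potential_odd (n : ℕ) (hn : 3 ≤ n) (hodd : Odd n) :
    let h : MvPolynomial (Fin 2) ℚ := X 0
    let l : MvPolynomial (Fin 2) ℚ := X 1
    let V : MvPolynomial (Fin 2) ℚ :=
      -(h ^ n * l) + h * l ^ 2 + C ((n : ℚ) / (2 * (2 * n - 1))) * h ^ (2 * n - 1)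
    pderiv 1 V = -(h ^ n - 2 * h * l) ∧
    pderiv 0 V = l ^ 2 + C ((n : ℚ) / 2) * h ^ (n - 2) * (h ^ n - 2 * h * l) ∧
    Ideal.span {pderiv 0 V, pderiv 1 V} = Ideal.span {h ^ n - 2 * h * l, l ^ 2} :=
  quadric_potential_odd_general n hn
end

section
/- In ℚ[y_1, y_4], let r_9 = 2y_1^9 + 3y_1y_4^2 - 6y_1^5y_4 and r_{12} = y_4^3 - 6y_1^4y_4^2 + y_1^{12}, and let V = 2y_1^9y_4 + y_1y_4^3 - 3y_1^5y_4^2 - (5/13)y_1^{13}. Then ∂V/∂y_4 = r_9 and ∂V/∂y_1 = r_{12} - 3y_1^3 r_9; in particular the Jacobi ideal of V equals the ideal (r_9, r_{12}). -/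
/-!
`V` is found by integrating `r₉` in `y₄` and choosing the pure `y₁`-term so that `∂V/∂y₁ ≡ r₁₂`
modulo `r₉`. The two partial derivatives are then obtained from `(r₉, r₁₂)` by a triangular
change of generators, so the Jacobi ideal of `V` is `(r₉, r₁₂)`.
-/

open MvPolynomial

@[simp]
theorem Derivation.map_ofNat {R A M : Type*} [CommSemiring R] [CommSemiring A] [Algebra R A]
    [AddCommMonoid M] [Module A M] [Module R M] (D : Derivation R A M) (n : ℕ) [n.AtLeastTwo] :
    D (ofNat(n) : A) = 0 :=
  D.map_natCast n

/-- potential for `H*(E₆/(Spin(10)×SO(2)), ℚ) = ℚ[y₁,y₄]/(r₉, r₁₂)`.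
Here `y₁ = X 0`, `y₄ = X 1`. -/
theorem E6_potential :
    let y1 : MvPolynomial (Fin 2) ℚ := X 0
    let y4 : MvPolynomial (Fin 2) ℚ := X 1
    let r9 : MvPolynomial (Fin 2) ℚ := 2 * y1 ^ 9 + 3 * y1 * y4 ^ 2 - 6 * y1 ^ 5 * y4
    let r12 : MvPolynomial (Fin 2) ℚ := y4 ^ 3 - 6 * y1 ^ 4 * y4 ^ 2 + y1 ^ 12
    let V : MvPolynomial (Fin 2) ℚ :=
      2 * y1 ^ 9 * y4 + y1 * y4 ^ 3 - 3 * y1 ^ 5 * y4 ^ 2 - C (5/13 : ℚ) * y1 ^ 13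
    pderiv 1 V = r9 ∧
    pderiv 0 V = r12 - 3 * y1 ^ 3 * r9 ∧
    Ideal.span {pderiv 0 V, pderiv 1 V} = Ideal.span {r9, r12} := by
  intro y1 y4 r9 r12 V
  have hV1 : pderiv 1 V = r9 := by
    simp only [V, r9, y1, y4, map_sub, map_add, Derivation.leibniz, Derivation.leibniz_pow,
      Derivation.map_ofNat, pderiv_C, pderiv_X_self, pderiv_X_of_ne zero_ne_one, smul_eq_mul]
    ring
  have hV0 : pderiv 0 V = r12 - 3 * y1 ^ 3 * r9 := by
    simp only [V, r9, r12, y1, y4, map_sub, map_add, Derivation.leibniz, Derivation.leibniz_pow,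
      Derivation.map_ofNat, pderiv_C, pderiv_X_self, pderiv_X_of_ne one_ne_zero, smul_eq_mul]
    have h13 : (C (5 / 13 : ℚ) : MvPolynomial (Fin 2) ℚ) * 13 = 5 := by
      rw [← map_ofNat C 13, ← map_ofNat C 5, ← C_mul]; norm_num
    linear_combination (-y1 ^ 12) * h13
  refine ⟨hV1, hV0, ?_⟩
  rw [hV0, hV1, Ideal.span_pair_sub_mul_right, Ideal.span_pair_comm]
end

section
/- Let y_1, ..., y_n be pairwise distinct complex numbers and f a symmetric polynomial in k variables with deg f < k(n-k). Then Σ over all k-element subsets {i_1,...,i_k} of {1,...,n} of f(y_{i_1},...,y_{i_k}) / ∏_{i ∈ {i_1,...,i_k}, j ∉ {i_1,...,i_k}} (y_i - y_j) equals 0. -/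
/-!
Put `w i = ∏_{j ≠ i} (y i - y j)` and `D = ∏_{l ≠ l'} (X l - X l')`. Since
`∏_{i ∈ S} w i = D(y_S) · ∏_{i ∈ S, j ∉ S} (y i - y j)`, the summand for `S` is
`(f D)(y_S) / ∏_{i ∈ S} w i`, so `k!` times the sum is `∑_a (f D)(y ∘ a) / ∏_l w (a l)` over
all maps `a : Fin k → Fin n`; non-injective `a` contribute nothing because `D` vanishes there.
Monomial by monomial this sum factors as `∏_l ∑_i y i ^ m_l / w i`. As
`deg (f D) < k (n - k) + k (k - 1) = k (n - 1)`, some `m_l < n - 1`, and by Lagrange interpolation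
(read off at the coefficient of `X ^ (n - 1)`) that factor vanishes.
-/

open MvPolynomial Finset

theorem Lagrange.sum_pow_div_prod_sub_eq_zero {F ι : Type*} [Field F] [Fintype ι] [DecidableEq ι]
    {v : ι → F} (hv : Function.Injective v) {m : ℕ} (hm : m + 1 < Fintype.card ι) :
    ∑ i, v i ^ m / ∏ j ∈ univ.erase i, (v i - v j) = 0 := by
  have h := Lagrange.coeff_eq_sum (s := univ) hv.injOn (P := Polynomial.X ^ m)
    (by rw [Polynomial.degree_X_pow, card_univ]; exact_mod_cast (by omega : m < Fintype.card ι))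
  simp only [Polynomial.coeff_X_pow, card_univ, Polynomial.eval_pow, Polynomial.eval_X] at h
  rw [← h, if_neg (by omega)]

theorem MvPolynomial.sum_eval_comp_mul_prod_eq_zero {R σ ι : Type*} [CommRing R] [Fintype σ]
    [Fintype ι] [DecidableEq σ] (g : MvPolynomial σ R) (x c : ι → R) (M : ℕ)
    (hc : ∀ m < M, ∑ i, x i ^ m * c i = 0) (hg : g.totalDegree < Fintype.card σ * M) :
    ∑ a : σ → ι, eval (x ∘ a) g * ∏ l, c (a l) = 0 := by
  simp only [eval_eq', Function.comp_apply, sum_mul]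
  rw [sum_comm]
  refine sum_eq_zero fun d hd => ?_
  obtain ⟨l, hl⟩ : ∃ l, d l < M := by
    by_contra! h
    have hdeg := le_totalDegree hd
    rw [Finsupp.sum_fintype _ _ (fun _ => rfl)] at hdeg
    have := sum_le_sum fun l (_ : l ∈ univ) => h l
    simp only [sum_const, card_univ, smul_eq_mul] at this
    omega
  calc ∑ a : σ → ι, g.coeff d * (∏ l, x (a l) ^ d l) * ∏ l, c (a l)
      = g.coeff d * ∏ l, ∑ i, x i ^ d l * c i := by
        simp_rw [Finset.prod_univ_sum, Fintype.piFinset_univ, mul_sum, prod_mul_distrib, mul_assoc]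
    _ = 0 := by rw [prod_eq_zero (mem_univ l) (hc _ hl), mul_zero]

namespace MvPolynomial

variable (σ R : Type*) [Fintype σ] [DecidableEq σ] [CommRing R]

noncomputable def pairDiffProd : MvPolynomial σ R :=
  ∏ l, ∏ l' ∈ univ.erase l, (X l - X l')

variable {σ R}

theorem totalDegree_pairDiffProd_le :
    (pairDiffProd σ R).totalDegree ≤ Fintype.card σ * (Fintype.card σ - 1) := by
  have hX : ∀ l : σ, (X l : MvPolynomial σ R).totalDegree ≤ 1 := fun l =>
    (totalDegree_monomial_le _ _).trans (by simp)
  have hXX : ∀ l l' : σ, (X l - X l' : MvPolynomial σ R).totalDegree ≤ 1 := fun l l' =>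
    (totalDegree_sub _ _).trans (max_le (hX l) (hX l'))
  calc (pairDiffProd σ R).totalDegree
      ≤ ∑ l : σ, ∑ l' ∈ univ.erase l, (X l - X l' : MvPolynomial σ R).totalDegree :=
        (totalDegree_finsetProd _ _).trans (sum_le_sum fun _ _ => totalDegree_finsetProd _ _)
    _ ≤ ∑ l : σ, ∑ l' ∈ univ.erase l, 1 :=
        sum_le_sum fun l _ => sum_le_sum fun l' _ => hXX l l'
    _ = Fintype.card σ * (Fintype.card σ - 1) := by simp [card_erase_of_mem]

theorem eval_pairDiffProd_of_not_injective {x : σ → R} (hx : ¬ Function.Injective x) :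
    eval x (pairDiffProd σ R) = 0 := by
  obtain ⟨l, l', hxl, hl⟩ := Function.not_injective_iff.mp hx
  simp only [pairDiffProd, map_prod, map_sub, eval_X]
  exact prod_eq_zero (mem_univ l) (prod_eq_zero (mem_erase.mpr ⟨Ne.symm hl, mem_univ l'⟩)
    (sub_eq_zero.mpr hxl))

theorem eval_pairDiffProd_comp_embedding {ι : Type*} [DecidableEq ι] (x : ι → R) (e : σ ↪ ι) :
    eval (x ∘ e) (pairDiffProd σ R) =
      ∏ i ∈ univ.map e, ∏ j ∈ (univ.map e).erase i, (x i - x j) := by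
  simp only [pairDiffProd, map_prod, map_sub, eval_X, Function.comp_apply, prod_map,
    ← map_erase]

end MvPolynomial

theorem Finset.prod_erase_mul_prod_compl {α M : Type*} [Fintype α] [DecidableEq α]
    [CommMonoid M] {S : Finset α} {i : α} (hi : i ∈ S) (g : α → M) :
    (∏ j ∈ S.erase i, g j) * ∏ j ∈ Sᶜ, g j = ∏ j ∈ univ.erase i, g j := by
  rw [← prod_union (disjoint_left.mpr fun j hj => by simp [mem_of_mem_erase hj])]
  congr 1
  ext j
  by_cases hj : j = i <;> simp [hj, hi, em]

theorem eval_mul_pairDiffProd_mul_prod_inv {K κ α : Type*} [Field K] [Fintype κ]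
    [DecidableEq κ] [Fintype α] [DecidableEq α] {y : α → K} (hy : Function.Injective y)
    {f : MvPolynomial κ K} (hf : f.IsSymmetric) (e : κ ↪ α) (σ : Equiv.Perm κ) :
    eval (y ∘ e ∘ σ) (f * pairDiffProd κ K) *
        ∏ l, (∏ j ∈ univ.erase (e (σ l)), (y (e (σ l)) - y j))⁻¹ =
      eval (y ∘ e) f / ∏ i ∈ univ.map e, ∏ j ∈ (univ.map e)ᶜ, (y i - y j) := by
  set S := univ.map e
  have hf' : eval (y ∘ e ∘ σ) f = eval (y ∘ e) f := by
    rw [← Function.comp_assoc, ← eval_rename, hf σ]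
  have hD : eval (y ∘ e ∘ σ) (pairDiffProd κ K) = ∏ i ∈ S, ∏ j ∈ S.erase i, (y i - y j) := by
    have hS : univ.map (σ.toEmbedding.trans e) = S := by
      rw [← map_map, map_univ_equiv]
    rw [← hS]
    exact eval_pairDiffProd_comp_embedding y (σ.toEmbedding.trans e)
  have hw : ∏ l, (∏ j ∈ univ.erase (e (σ l)), (y (e (σ l)) - y j))⁻¹ =
      ((∏ i ∈ S, ∏ j ∈ S.erase i, (y i - y j)) * ∏ i ∈ S, ∏ j ∈ Sᶜ, (y i - y j))⁻¹ := by
    rw [Equiv.prod_comp σ (fun l => (∏ j ∈ univ.erase (e l), (y (e l) - y j))⁻¹),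
      prod_inv_distrib, ← prod_mul_distrib, prod_map]
    exact congrArg _ (prod_congr rfl fun l _ =>
      (prod_erase_mul_prod_compl (mem_map_of_mem e (mem_univ l)) _).symm)
  have hV : ∏ i ∈ S, ∏ j ∈ S.erase i, (y i - y j) ≠ 0 :=
    prod_ne_zero_iff.mpr fun i _ => prod_ne_zero_iff.mpr fun j hj =>
      sub_ne_zero.mpr (hy.ne (ne_of_mem_erase hj).symm)
  rw [eval_mul, hf', hD, hw]
  field_simp

theorem Finset.sum_eq_sum_powersetCard_sum_perm {α M : Type*} [Fintype α] [LinearOrder α]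
    [AddCommMonoid M] {k : ℕ} (F : (Fin k → α) → M)
    (hF : ∀ a, ¬ Function.Injective a → F a = 0) :
    ∑ a, F a = ∑ S ∈ (univ.powersetCard k).attach, ∑ σ : Equiv.Perm (Fin k),
      F (S.1.orderEmbOfFin (mem_powersetCard.mp S.2).2 ∘ σ) := by
  rw [sum_sigma']
  symm
  refine sum_bij_ne_zero (fun p _ _ => p.1.1.orderEmbOfFin (mem_powersetCard.mp p.1.2).2 ∘ p.2)
    (fun _ _ _ => mem_univ _) ?_ ?_ (fun _ _ _ => rfl)
  · rintro ⟨S, σ⟩ - - ⟨S', σ'⟩ - - h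
    have hS : S = S' := by
      apply Subtype.ext
      have := congrArg (fun a => univ.image a) h
      simpa [← image_image, image_univ_equiv] using this
    subst hS
    simpa using (S.1.orderEmbOfFin _).injective.comp_left h
  · intro a _ ha
    have hinj : Function.Injective a := by_contra fun h => ha (hF a h)
    set S := univ.image a
    have hS : S.card = k := by simp [S, card_image_of_injective _ hinj]
    let τ : Fin k → Fin k := fun l =>
      (S.orderIsoOfFin hS).symm ⟨a l, mem_image_of_mem a (mem_univ l)⟩
    have hτ : Function.Injective τ := fun l l' h => hinj (by simpa [τ] using h)
    have hτa : S.orderEmbOfFin hS ∘ τ = a := by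
      funext l
      simp [τ, ← coe_orderIsoOfFin_apply]
    exact ⟨⟨⟨S, mem_powersetCard.mpr ⟨subset_univ _, hS⟩⟩,
      Equiv.ofBijective τ hτ.bijective_of_finite⟩,
      mem_sigma.mpr ⟨mem_attach _ _, mem_univ _⟩, hτa ▸ ha, hτa⟩

theorem equivariant_pairing_vanishing_general (n k : ℕ) (y : Fin n → ℂ)
    (hy : Function.Injective y) (f : MvPolynomial (Fin k) ℂ)
    (hf : f.IsSymmetric) (hdeg : f.totalDegree < k * (n - k)) :
    ∑ S ∈ (Finset.univ.powersetCard k).attach,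
      MvPolynomial.eval
          (fun i => y (S.1.orderEmbOfFin (Finset.mem_powersetCard.mp S.2).2 i)) f /
        ∏ i ∈ S.1, ∏ j ∈ S.1ᶜ, (y i - y j) = 0 := by
  set c : Fin n → ℂ := fun i => (∏ j ∈ univ.erase i, (y i - y j))⁻¹
  have hc : ∀ m < n - 1, ∑ i, y i ^ m * c i = 0 := fun m hm => by
    simpa [c, div_eq_mul_inv] using
      Lagrange.sum_pow_div_prod_sub_eq_zero hy (by simpa using (by omega : m + 1 < n))
  have hdeg_fD : (f * pairDiffProd (Fin k) ℂ).totalDegree < Fintype.card (Fin k) * (n - 1) := by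
    obtain ⟨hk, hkn⟩ := CanonicallyOrderedAdd.mul_pos.mp (f.totalDegree.zero_le.trans_lt hdeg)
    have hD := totalDegree_pairDiffProd_le (σ := Fin k) (R := ℂ)
    rw [Fintype.card_fin] at hD ⊢
    calc (f * pairDiffProd (Fin k) ℂ).totalDegree ≤ f.totalDegree + k * (k - 1) :=
          (totalDegree_mul _ _).trans (add_le_add le_rfl hD)
      _ < k * (n - k) + k * (k - 1) := by omega
      _ = k * (n - 1) := by rw [← mul_add]; congr 1; omega
  have hsum := sum_eval_comp_mul_prod_eq_zero _ y c (n - 1) hc hdeg_fD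
  rw [sum_eq_sum_powersetCard_sum_perm _ fun a ha => by
    rw [eval_mul, eval_pairDiffProd_of_not_injective fun h => ha h.of_comp, mul_zero, zero_mul]]
    at hsum
  refine (smul_eq_zero.mp ?_).resolve_left k.factorial_ne_zero
  rw [← hsum, smul_sum]
  refine sum_congr rfl fun S _ => ?_
  rw [show k.factorial = #(univ : Finset (Equiv.Perm (Fin k))) by simp [Fintype.card_perm],
    ← sum_const]
  refine sum_congr rfl fun σ _ => ?_
  have h := eval_mul_pairDiffProd_mul_prod_inv hy hf
    (S.1.orderEmbOfFin (mem_powersetCard.mp S.2).2).toEmbedding σ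
  rw [map_orderEmbOfFin_univ] at h
  exact h.symm

/-- for pairwise distinct `y₁,…,yₙ ∈ ℂ` and a symmetric polynomial
`f` in `k` variables with `deg f < k(n-k)`,
`∑_{S ⊆ {1,…,n}, |S| = k} f(y_S) / ∏_{i∈S, j∉S} (yᵢ - yⱼ) = 0`. -/
theorem equivariant_pairing_vanishing (n k : ℕ) (hk : k ≤ n) (y : Fin n → ℂ)
    (hy : Function.Injective y) (f : MvPolynomial (Fin k) ℂ)
    (hf : f.IsSymmetric) (hdeg : f.totalDegree < k * (n - k)) :
    ∑ S ∈ (Finset.univ.powersetCard k).attach,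
      MvPolynomial.eval
          (fun i => y (S.1.orderEmbOfFin (Finset.mem_powersetCard.mp S.2).2 i)) f /
        ∏ i ∈ S.1, ∏ j ∈ S.1ᶜ, (y i - y j) = 0 :=
  equivariant_pairing_vanishing_general n k y hy f hf hdeg
end

section
/- Let y_1, ..., y_n be pairwise distinct complex numbers and f a symmetric polynomial in k variables with deg f = k(n-k). Then Σ over all k-element subsets S = {i_1,...,i_k} of {1,...,n} of f(y_{i_1},...,y_{i_k}) / ∏_{i∈S, j∉S}(y_i - y_j) is independent of y_1,...,y_n (it is a constant depending only on f). -/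
/-!
Antisymmetrizing `f(x₁, …, x_k) · Δ(x₁, …, x_k) · Δ(x_{k+1}, …, x_n)` over `Sₙ` (`Δ` the
Vandermonde product) gives an alternating polynomial of degree at most `k(n-k) + C(k,2) +
C(n-k,2) = C(n,2)`, hence a constant multiple `c · Δ(x₁, …, xₙ)`. Evaluated at `y` and divided
by `Δ(y)`, the term of a permutation `σ` is, up to the sign `(-1)^{k(n-k)}`, the localization
summand of the subset `σ{1, …, k}`, because the factors of `Δ` missing from the term are exactly
the differences across that subset and its complement. Every `k`-subset is the image of the same
number of permutations, so the localization sum is a constant multiple of `c`.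
-/

open MvPolynomial Finset Equiv

namespace MvPolynomial

variable {ι R : Type*} [CommRing R] [Fintype ι] [DecidableEq ι]

def IsAlternating (p : MvPolynomial ι R) : Prop :=
  ∀ σ : Perm ι, rename σ p = Perm.sign σ • p

namespace IsAlternating

variable {p : MvPolynomial ι R}

theorem coeff_mapDomain (hp : p.IsAlternating) (σ : Perm ι) (m : ι →₀ ℕ) :
    coeff (m.mapDomain σ) p = Perm.sign σ • coeff m p := by
  conv_rhs => rw [← coeff_rename_mapDomain σ σ.injective p m]
  rw [hp σ, coeff_smul, smul_smul, Int.units_mul_self, one_smul]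

theorem coeff_eq_zero_of_apply_eq [NoZeroDivisors R] [CharZero R] (hp : p.IsAlternating)
    {m : ι →₀ ℕ} {a b : ι} (hab : a ≠ b) (hm : m a = m b) : coeff m p = 0 := by
  have hswap : m.mapDomain (swap a b) = m := by
    ext j
    rw [Finsupp.mapDomain_equiv_apply, symm_swap, swap_apply_def]
    split_ifs <;> simp_all
  have h := hp.coeff_mapDomain (swap a b) m
  rwa [hswap, Perm.sign_swap hab, Units.neg_smul, one_smul, CharZero.eq_neg_self_iff] at h

end IsAlternating

noncomputable def antisymmetrize (q : MvPolynomial ι R) : MvPolynomial ι R :=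
  ∑ σ : Perm ι, Perm.sign σ • rename σ q

theorem isAlternating_antisymmetrize (q : MvPolynomial ι R) :
    (antisymmetrize q).IsAlternating := by
  intro π
  simp only [antisymmetrize, map_sum, Finset.smul_sum]
  refine Fintype.sum_equiv (Equiv.mulLeft π) _ _ fun σ => ?_
  rw [coe_mulLeft, Perm.sign_mul, smul_smul, ← mul_assoc, Int.units_mul_self, one_mul,
    Perm.coe_mul, ← rename_rename, Units.smul_def, Units.smul_def, map_zsmul]

theorem totalDegree_antisymmetrize_le (q : MvPolynomial ι R) :
    (antisymmetrize q).totalDegree ≤ q.totalDegree :=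
  totalDegree_finsetSum_le fun _ _ =>
    (totalDegree_smul_le _ _).trans (totalDegree_rename_le _ _)

end MvPolynomial

theorem MvPolynomial.IsSymmetric.eval_comp_eq_of_range_eq {R α : Type*} [CommSemiring R] {k : ℕ}
    {f : MvPolynomial (Fin k) R} (hf : f.IsSymmetric) {a b : Fin k → α}
    (ha : Function.Injective a) (hb : Function.Injective b) (hab : Set.range a = Set.range b) (y : α → R) :
    eval (y ∘ a) f = eval (y ∘ b) f := by
  let τ : Perm (Fin k) :=
    (Equiv.ofInjective a ha).trans ((Equiv.setCongr hab).trans (Equiv.ofInjective b hb).symm)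
  have hτ : b ∘ τ = a := by
    ext i
    simp only [τ, Function.comp_apply, Equiv.trans_apply]
    rw [Equiv.apply_ofInjective_symm hb]
    rfl
  rw [← hτ, ← Function.comp_assoc, ← eval_rename, hf τ]

section Vandermonde

variable {R : Type*} [CommRing R] {n : ℕ}

def ltPairs (n : ℕ) : Finset (Fin n × Fin n) := {p | p.1 < p.2}

@[simp]
theorem mem_ltPairs {p : Fin n × Fin n} : p ∈ ltPairs n ↔ p.1 < p.2 := by
  simp [ltPairs]

@[to_additive]
theorem prod_ltPairs {M : Type*} [CommMonoid M] (g : Fin n × Fin n → M) :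
    ∏ p ∈ ltPairs n, g p = ∏ i, ∏ j ∈ Ioi i, g (i, j) := by
  rw [ltPairs, ← univ_product_univ, prod_filter, prod_product]
  refine prod_congr rfl fun i _ => ?_
  rw [← prod_filter]
  congr 1
  ext j
  simp

theorem card_ltPairs : #(ltPairs n) = ∑ i : Fin n, (i : ℕ) := by
  rw [card_eq_sum_ones, sum_ltPairs]
  simp only [← card_eq_sum_ones, Fin.card_Ioi]
  exact Fintype.sum_equiv Fin.revPerm _ _ fun i => by simp; omega

def diffProd {α : Type*} (E : Finset (α × α)) (x : α → R) : R :=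
  ∏ p ∈ E, (x p.2 - x p.1)

theorem map_diffProd {α S F : Type*} [CommRing S] [FunLike F R S] [RingHomClass F R S] (f : F)
    (E : Finset (α × α)) (x : α → R) : f (diffProd E x) = diffProd E (f ∘ x) := by
  simp [diffProd, map_prod, map_sub]

theorem eval_diffProd_X {α : Type*} (E : Finset (α × α)) (y : α → R) :
    eval y (diffProd E X) = diffProd E y := by
  simp [diffProd, map_prod]

theorem diffProd_ne_zero [IsDomain R] {α : Type*} {E : Finset (α × α)} {x : α → R}
    (hx : Function.Injective x) (hE : ∀ p ∈ E, p.1 ≠ p.2) : diffProd E x ≠ 0 :=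
  prod_ne_zero_iff.2 fun p hp => sub_ne_zero.2 (hx.ne (hE p hp).symm)

theorem totalDegree_diffProd_X_le [Nontrivial R] (E : Finset (Fin n × Fin n)) :
    (diffProd E (X : Fin n → MvPolynomial (Fin n) R)).totalDegree ≤ #E := by
  refine (totalDegree_finsetProd _ _).trans ?_
  refine (sum_le_sum fun p _ => (totalDegree_sub _ _).trans ?_).trans (card_eq_sum_ones _).ge
  simp [totalDegree_X]

theorem diffProd_ltPairs (x : Fin n → R) :
    diffProd (ltPairs n) x = (Matrix.vandermonde x).det := by
  rw [diffProd, prod_ltPairs, Matrix.det_vandermonde]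

theorem diffProd_ltPairs_comp_perm (x : Fin n → R) (σ : Perm (Fin n)) :
    diffProd (ltPairs n) (x ∘ σ) = Perm.sign σ • diffProd (ltPairs n) x := by
  rw [diffProd_ltPairs, diffProd_ltPairs, Units.smul_def, zsmul_eq_mul, ← Matrix.det_permute]
  rfl

noncomputable def vandermondePoly (n : ℕ) (R : Type*) [CommRing R] : MvPolynomial (Fin n) R :=
  diffProd (ltPairs n) X

theorem isAlternating_vandermondePoly : (vandermondePoly n R).IsAlternating := fun σ => by
  rw [vandermondePoly, map_diffProd, ← diffProd_ltPairs_comp_perm]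
  congr 1
  ext1 i
  exact rename_X σ i

noncomputable def staircase (n : ℕ) : Fin n →₀ ℕ := Finsupp.equivFunOnFinite.symm (↑)

@[simp]
theorem staircase_apply (i : Fin n) : staircase n i = i := rfl

theorem eq_one_of_mapDomain_staircase_eq {σ : Perm (Fin n)}
    (h : (staircase n).mapDomain σ = staircase n) : σ = 1 := by
  ext i
  simpa using (DFunLike.congr_fun h (σ i)).symm

theorem vandermondePoly_eq_sum :
    vandermondePoly n R =
      ∑ σ : Perm (Fin n), Perm.sign σ • monomial ((staircase n).mapDomain σ) 1 := by
  rw [vandermondePoly, diffProd_ltPairs, Matrix.det_apply]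
  refine sum_congr rfl fun σ _ => ?_
  rw [← rename_monomial, monomial_eq, C_1, one_mul,
    Finsupp.prod_fintype _ _ fun _ => pow_zero _, map_prod]
  simp [Matrix.vandermonde_apply]

theorem coeff_staircase_vandermondePoly : coeff (staircase n) (vandermondePoly n R) = 1 := by
  rw [vandermondePoly_eq_sum, coeff_sum, sum_eq_single 1]
  · simp
  · intro σ _ hσ
    rw [coeff_smul, coeff_monomial, if_neg (mt eq_one_of_mapDomain_staircase_eq hσ), smul_zero]
  · simp

theorem val_le_of_strictMono {f : Fin n → ℕ} (hf : StrictMono f) (i : Fin n) : (i : ℕ) ≤ f i := by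
  obtain ⟨i, hi⟩ := i
  induction i with
  | zero => exact Nat.zero_le _
  | succ i ih => exact (ih (by omega)).trans_lt (hf (Fin.mk_lt_mk.2 i.lt_succ_self))

theorem exists_perm_apply_eq_val {a : Fin n → ℕ} (ha : Function.Injective a)
    (hsum : ∑ i, a i ≤ ∑ i : Fin n, (i : ℕ)) : ∃ π : Perm (Fin n), ∀ i, a (π i) = i := by
  let π := Tuple.sort a
  have hle : ∀ i : Fin n, (i : ℕ) ≤ a (π i) := val_le_of_strictMono <|
    (Tuple.monotone_sort a).strictMono_of_injective (ha.comp π.injective)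
  have hsum' : ∑ i : Fin n, (i : ℕ) = ∑ i, a (π i) :=
    le_antisymm (sum_le_sum fun i _ => hle i) (by rwa [Equiv.sum_comp π a])
  exact ⟨π, fun i => ((sum_eq_sum_iff_of_le fun i _ => hle i).1 hsum' i (mem_univ i)).symm⟩

theorem exists_eq_mapDomain_staircase {m : Fin n →₀ ℕ} (hm : Function.Injective m)
    (hdeg : (m.sum fun _ e => e) ≤ #(ltPairs n)) :
    ∃ π : Perm (Fin n), m = (staircase n).mapDomain π := by
  rw [Finsupp.sum_fintype _ _ fun _ => rfl, card_ltPairs] at hdeg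
  obtain ⟨π, hπ⟩ := exists_perm_apply_eq_val hm hdeg
  refine ⟨π, Finsupp.ext fun j => ?_⟩
  rw [Finsupp.mapDomain_equiv_apply, staircase_apply, ← hπ, apply_symm_apply]

theorem MvPolynomial.IsAlternating.eq_smul_vandermondePoly [NoZeroDivisors R] [CharZero R]
    {p : MvPolynomial (Fin n) R} (hp : p.IsAlternating) (hdeg : p.totalDegree ≤ #(ltPairs n)) :
    p = coeff (staircase n) p • vandermondePoly n R := by
  have hV := isAlternating_vandermondePoly (n := n) (R := R)
  ext m
  rw [coeff_smul, smul_eq_mul]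
  by_cases hm : Function.Injective m
  · by_cases h0 : coeff m p = 0 ∧ coeff m (vandermondePoly n R) = 0
    · rw [h0.1, h0.2, mul_zero]
    obtain ⟨π, rfl⟩ : ∃ π : Perm (Fin n), m = (staircase n).mapDomain π := by
      refine exists_eq_mapDomain_staircase hm ?_
      rcases not_and_or.1 h0 with h | h
      · exact (le_totalDegree (mem_support_iff.2 h)).trans hdeg
      · exact (le_totalDegree (mem_support_iff.2 h)).trans (totalDegree_diffProd_X_le _)
    rw [hp.coeff_mapDomain, hV.coeff_mapDomain, coeff_staircase_vandermondePoly, Units.smul_def,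
      Units.smul_def, zsmul_eq_mul, zsmul_eq_mul, mul_one, mul_comm]
  · obtain ⟨a, b, hab, hne⟩ : ∃ a b, m a = m b ∧ a ≠ b := by
      simpa [Function.Injective] using hm
    rw [hp.coeff_eq_zero_of_apply_eq hne hab, hV.coeff_eq_zero_of_apply_eq hne hab, mul_zero]

end Vandermonde

section PermImage

variable {α : Type*} [Fintype α] [DecidableEq α] {k : ℕ}

def permImage {s : Finset α} (hs : #s = k) (σ : Perm α) :
    {t // t ∈ (univ : Finset α).powersetCard k} :=
  ⟨s.image σ, mem_powersetCard.2 ⟨subset_univ _, by rw [card_image_of_injective _ σ.injective, hs]⟩⟩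

theorem sum_permImage_eq_card_smul {M : Type*} [AddCommMonoid M] {s : Finset α} (hs : #s = k)
    (g : {t // t ∈ (univ : Finset α).powersetCard k} → M) :
    ∑ σ : Perm α, g (permImage hs σ) =
      #{σ : Perm α | s.image σ = s} • ∑ t ∈ (univ.powersetCard k).attach, g t := by
  rw [← univ_eq_attach, ← sum_fiberwise' univ _ g, smul_sum]
  refine sum_congr rfl fun t _ => ?_
  rw [sum_const]
  congr 1
  obtain ⟨ρ, hρ⟩ : ∃ ρ : Perm α, s.image ρ = t := by
    obtain ⟨ρ, hρ⟩ := (Set.powersetCard.isPretransitive (α := α) (n := k)).exists_smul_eq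
      ⟨s, hs⟩ ⟨t, (mem_powersetCard.1 t.2).2⟩
    exact ⟨ρ, by simpa [Subtype.ext_iff, smul_finset_def] using hρ⟩
  refine (card_equiv (Equiv.mulLeft ρ) fun σ => ?_).symm
  simp [permImage, Subtype.ext_iff, ← hρ, Perm.coe_mul, ← image_image,
    (image_injective ρ.injective).eq_iff]

end PermImage

section Localization

variable {R : Type*} [CommRing R] {n k : ℕ}

def crossDiff {α : Type*} [Fintype α] [DecidableEq α] (S : Finset α) (x : α → R) : R :=
  ∏ i ∈ S, ∏ j ∈ Sᶜ, (x i - x j)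

theorem crossDiff_comp_perm {α : Type*} [Fintype α] [DecidableEq α] (S : Finset α) (x : α → R)
    (σ : Perm α) : crossDiff S (x ∘ σ) = crossDiff (S.image σ) x := by
  have hcompl : (S.image σ)ᶜ = Sᶜ.image σ := by
    rw [← coe_inj, coe_compl, coe_image, coe_image, coe_compl, Set.image_compl_eq σ.bijective]
  simp only [crossDiff, hcompl, prod_image σ.injective.injOn, Function.comp_apply]

theorem crossDiff_ne_zero [IsDomain R] {α : Type*} [Fintype α] [DecidableEq α] (S : Finset α)
    {x : α → R} (hx : Function.Injective x) : crossDiff S x ≠ 0 :=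
  prod_ne_zero_iff.2 fun _ hi => prod_ne_zero_iff.2 fun _ hj =>
    sub_ne_zero.2 (hx.ne (ne_of_mem_of_not_mem hi (mem_compl.1 hj)))

theorem prod_prod_compl_sub_eq_neg_one_pow_mul {α : Type*} [Fintype α] [DecidableEq α]
    (S : Finset α) (x : α → R) :
    ∏ i ∈ S, ∏ j ∈ Sᶜ, (x j - x i) = (-1) ^ (#S * #Sᶜ) * crossDiff S x := by
  calc ∏ i ∈ S, ∏ j ∈ Sᶜ, (x j - x i)
      = ∏ i ∈ S, ((-1) ^ #Sᶜ * ∏ j ∈ Sᶜ, (x i - x j)) :=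
        prod_congr rfl fun i _ => by simp only [← prod_neg, neg_sub]
    _ = (-1) ^ (#S * #Sᶜ) * crossDiff S x := by
        rw [prod_mul_distrib, prod_const, ← pow_mul', crossDiff]

def initialSegment (n k : ℕ) : Finset (Fin n) := {i | (i : ℕ) < k}

theorem card_initialSegment (hk : k ≤ n) : #(initialSegment n k) = k := by
  simp [initialSegment, Fin.card_filter_val_lt, hk]

theorem range_comp_castLE (hk : k ≤ n) (σ : Perm (Fin n)) :
    Set.range (σ ∘ Fin.castLE hk) = ((initialSegment n k).image σ : Set (Fin n)) := by
  rw [Set.range_comp, Fin.range_castLE, coe_image]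
  congr 1
  ext
  simp [initialSegment]

def sameSidePairs (n k : ℕ) : Finset (Fin n × Fin n) :=
  {p ∈ ltPairs n | ((p.1 : ℕ) < k ↔ (p.2 : ℕ) < k)}

theorem ltPairs_filter_not_sameSide :
    {p ∈ ltPairs n | ¬((p.1 : ℕ) < k ↔ (p.2 : ℕ) < k)} =
      initialSegment n k ×ˢ (initialSegment n k)ᶜ := by
  ext ⟨i, j⟩
  simp only [mem_ltPairs, initialSegment, mem_filter, mem_univ, true_and, mem_product,
    mem_compl, Fin.lt_def]
  omega

theorem card_sameSidePairs_add (hk : k ≤ n) :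
    #(sameSidePairs n k) + k * (n - k) = #(ltPairs n) := by
  rw [← card_filter_add_card_filter_not (s := ltPairs n)
    (fun p : Fin n × Fin n => ((p.1 : ℕ) < k ↔ (p.2 : ℕ) < k)), sameSidePairs,
    ltPairs_filter_not_sameSide, card_product, card_compl, card_initialSegment hk,
    Fintype.card_fin]

theorem diffProd_ltPairs_eq_mul (x : Fin n → R) :
    diffProd (ltPairs n) x = (-1) ^ (#(initialSegment n k) * #(initialSegment n k)ᶜ) *
      diffProd (sameSidePairs n k) x * crossDiff (initialSegment n k) x := by
  rw [diffProd, ← prod_filter_mul_prod_filter_not (ltPairs n)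
    (fun p : Fin n × Fin n => ((p.1 : ℕ) < k ↔ (p.2 : ℕ) < k)), ltPairs_filter_not_sameSide,
    prod_product, prod_prod_compl_sub_eq_neg_one_pow_mul, diffProd, sameSidePairs]
  ring

noncomputable def alternant (hk : k ≤ n) (f : MvPolynomial (Fin k) R) : MvPolynomial (Fin n) R :=
  antisymmetrize (rename (Fin.castLE hk) f * diffProd (sameSidePairs n k) X)

theorem totalDegree_alternant_le [Nontrivial R] (hk : k ≤ n) {f : MvPolynomial (Fin k) R}
    (hdeg : f.totalDegree ≤ k * (n - k)) : (alternant hk f).totalDegree ≤ #(ltPairs n) := by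
  refine (totalDegree_antisymmetrize_le _).trans <| (totalDegree_mul _ _).trans ?_
  have := (totalDegree_rename_le (Fin.castLE hk) f).trans hdeg
  have := totalDegree_diffProd_X_le (R := R) (sameSidePairs n k)
  have := card_sameSidePairs_add hk
  omega

end Localization

section Field

variable {K : Type*} [Field K] {n k : ℕ}

noncomputable def localizationSummand (f : MvPolynomial (Fin k) K) (y : Fin n → K)
    (S : {S // S ∈ (univ : Finset (Fin n)).powersetCard k}) : K :=
  eval (y ∘ S.1.orderEmbOfFin (mem_powersetCard.1 S.2).2) f / crossDiff S.1 y

theorem eval_sign_smul_rename_mul (hk : k ≤ n) {f : MvPolynomial (Fin k) K}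
    (hf : f.IsSymmetric) {y : Fin n → K} (hy : Function.Injective y) (σ : Perm (Fin n)) :
    eval y (Perm.sign σ • rename σ (rename (Fin.castLE hk) f * diffProd (sameSidePairs n k) X)) *
        (-1) ^ (#(initialSegment n k) * #(initialSegment n k)ᶜ) =
      diffProd (ltPairs n) y * localizationSummand f y (permImage (card_initialSegment hk) σ) := by
  have hV : diffProd (ltPairs n) y = Perm.sign σ •
      ((-1) ^ (#(initialSegment n k) * #(initialSegment n k)ᶜ) *
        diffProd (sameSidePairs n k) (y ∘ σ) *
          crossDiff (permImage (card_initialSegment hk) σ).1 y) := by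
    rw [permImage, ← crossDiff_comp_perm, ← diffProd_ltPairs_eq_mul, diffProd_ltPairs_comp_perm, smul_smul,
      Int.units_mul_self, one_smul]
  have hf' : eval (y ∘ σ ∘ Fin.castLE hk) f =
      eval (y ∘ (permImage (card_initialSegment hk) σ).1.orderEmbOfFin
        (mem_powersetCard.1 (permImage (card_initialSegment hk) σ).2).2) f :=
    hf.eval_comp_eq_of_range_eq (σ.injective.comp (Fin.castLE_injective hk))
      (Finset.orderEmbOfFin _ _).injective
      (by rw [range_comp_castLE, range_orderEmbOfFin, permImage]) y
  rw [localizationSummand, hV]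
  simp only [Units.smul_def, zsmul_eq_mul, map_mul, map_intCast, rename_rename, eval_rename,
    eval_diffProd_X, hf']
  field_simp [crossDiff_ne_zero _ hy]

theorem eval_alternant (hk : k ≤ n) {f : MvPolynomial (Fin k) K} (hf : f.IsSymmetric)
    {y : Fin n → K} (hy : Function.Injective y) :
    eval y (alternant hk f) * (-1) ^ (#(initialSegment n k) * #(initialSegment n k)ᶜ) =
      diffProd (ltPairs n) y * (#{σ : Perm (Fin n) | (initialSegment n k).image σ =
        initialSegment n k} • ∑ S ∈ (univ.powersetCard k).attach, localizationSummand f y S) := by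
  simp only [alternant, antisymmetrize, map_sum, sum_mul, eval_sign_smul_rename_mul hk hf hy,
    ← mul_sum]
  rw [sum_permImage_eq_card_smul]

theorem sum_localizationSummand_eq [CharZero K] (hk : k ≤ n) {f : MvPolynomial (Fin k) K}
    (hf : f.IsSymmetric) (hdeg : f.totalDegree ≤ k * (n - k)) {y : Fin n → K}
    (hy : Function.Injective y) :
    ∑ S ∈ (univ.powersetCard k).attach, localizationSummand f y S =
      coeff (staircase n) (alternant hk f) *
        (-1) ^ (#(initialSegment n k) * #(initialSegment n k)ᶜ) /
        #{σ : Perm (Fin n) | (initialSegment n k).image σ = initialSegment n k} := by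
  have hP : alternant hk f = coeff (staircase n) (alternant hk f) • vandermondePoly n K :=
    (isAlternating_antisymmetrize _).eq_smul_vandermondePoly (totalDegree_alternant_le hk hdeg)
  have hcard : (#{σ : Perm (Fin n) | (initialSegment n k).image σ = initialSegment n k} : K) ≠ 0 :=
    Nat.cast_ne_zero.2 (card_ne_zero_of_mem (mem_filter.2 ⟨mem_univ 1, image_id⟩))
  have hV := diffProd_ne_zero hy fun p hp => (mem_ltPairs.1 hp).ne
  have h := eval_alternant hk hf hy
  rw [hP, smul_eval, vandermondePoly, eval_diffProd_X, nsmul_eq_mul] at h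
  rw [eq_div_iff hcard]
  apply mul_left_cancel₀ hV
  linear_combination -h

end Field

/-- for a symmetric polynomial `f` in `k` variables of degree
exactly `k(n-k)`, the localization sum
`∑_{S ⊆ {1,…,n}, |S| = k} f(y_S) / ∏_{i∈S, j∉S} (yᵢ - yⱼ)`
does not depend on the (pairwise distinct) values `y₁, …, yₙ`. -/
theorem equivariant_pairing_constant (n k : ℕ) (hk : k ≤ n)
    (f : MvPolynomial (Fin k) ℂ) (hf : f.IsSymmetric)
    (hdeg : f.totalDegree = k * (n - k))
    (y y' : Fin n → ℂ) (hy : Function.Injective y) (hy' : Function.Injective y') :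
    ∑ S ∈ (Finset.univ.powersetCard k).attach,
      MvPolynomial.eval
          (fun i => y (S.1.orderEmbOfFin (Finset.mem_powersetCard.mp S.2).2 i)) f /
        ∏ i ∈ S.1, ∏ j ∈ S.1ᶜ, (y i - y j) =
    ∑ S ∈ (Finset.univ.powersetCard k).attach,
      MvPolynomial.eval
          (fun i => y' (S.1.orderEmbOfFin (Finset.mem_powersetCard.mp S.2).2 i)) f /
        ∏ i ∈ S.1, ∏ j ∈ S.1ᶜ, (y' i - y' j) :=
  (sum_localizationSummand_eq hk hf hdeg.le hy).trans
    (sum_localizationSummand_eq hk hf hdeg.le hy').symm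
end

section
/- In ℚ[x_1, x_3] with the potential V_7 = x_1 x_3^2 - x_1^4 x_3 + (2/7) x_1^7, the partial derivatives are ∂V_7/∂x_3 = 2x_1x_3 - x_1^4 and ∂V_7/∂x_1 = x_3^2 - 4x_1^3x_3 + 2x_1^6, and the Jacobi ring ℚ[x_1,x_3]/(∂V_7/∂x_1, ∂V_7/∂x_3) is a finite-dimensional ℚ-vector space of dimension 8. -/
open MvPolynomial
open Finsupp

abbrev P2 := MvPolynomial (Fin 2) ℚ

noncomputable def dd (i j : ℕ) : Fin 2 →₀ ℕ := Finsupp.single 0 i + Finsupp.single 1 j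

lemma dd_apply0 (i j : ℕ) : dd i j 0 = i := by
  simp [dd, Finsupp.single_apply]

lemma dd_apply1 (i j : ℕ) : dd i j 1 = j := by
  simp [dd, Finsupp.single_apply]

lemma dd_eq_iff {a b c e : ℕ} : dd a b = dd c e ↔ a = c ∧ b = e := by
  constructor
  · intro h
    refine ⟨?_, ?_⟩
    · have := DFunLike.congr_fun h 0; simpa [dd_apply0] using this
    · have := DFunLike.congr_fun h 1; simpa [dd_apply1] using this
  · rintro ⟨rfl, rfl⟩; rfl

lemma dd_zero : dd 0 0 = 0 := by simp [dd]

lemma single0_eq_dd (i : ℕ) : Finsupp.single (0 : Fin 2) i = dd i 0 := by simp [dd]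
lemma single1_eq_dd (j : ℕ) : Finsupp.single (1 : Fin 2) j = dd 0 j := by simp [dd]

noncomputable def phi : P2 →ₗ[ℚ] (Fin 8 → ℚ) :=
  LinearMap.pi
    ![lcoeff ℚ (dd 0 0), lcoeff ℚ (dd 1 0), lcoeff ℚ (dd 2 0), lcoeff ℚ (dd 3 0),
      lcoeff ℚ (dd 4 0) + (1/2 : ℚ) • lcoeff ℚ (dd 1 1),
      lcoeff ℚ (dd 5 0) + (1/2 : ℚ) • lcoeff ℚ (dd 2 1),
      lcoeff ℚ (dd 6 0) + (1/2 : ℚ) • lcoeff ℚ (dd 3 1),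
      lcoeff ℚ (dd 0 1)]

lemma coeff_X0_mul (i j : ℕ) (h : P2) :
    coeff (dd (i+1) j) (X 0 * h) = coeff (dd i j) h := by
  have e : dd (i+1) j = Finsupp.single 0 1 + dd i j := by
    simp [dd, Finsupp.single_add]; abel
  rw [e, coeff_X_mul]

lemma coeff_X1_mul (i j : ℕ) (h : P2) :
    coeff (dd i (j+1)) (X 1 * h) = coeff (dd i j) h := by
  have e : dd i (j+1) = Finsupp.single 1 1 + dd i j := by
    simp [dd, Finsupp.single_add]; abel
  rw [e, coeff_X_mul]

lemma coeff_X0_mul_zero (j : ℕ) (h : P2) : coeff (dd 0 j) (X 0 * h) = 0 := by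
  rw [coeff_X_mul']
  simp [Finsupp.mem_support_iff, dd_apply0]

lemma coeff_X1_mul_zero (i : ℕ) (h : P2) : coeff (dd i 0) (X 1 * h) = 0 := by
  rw [coeff_X_mul']
  simp [Finsupp.mem_support_iff, dd_apply1]


@[simp] lemma cons_val_five' {α : Type*} (a0 a1 a2 a3 a4 a5 a6 a7 : α) :
    ![a0,a1,a2,a3,a4,a5,a6,a7] (5 : Fin 8) = a5 := rfl
@[simp] lemma cons_val_six' {α : Type*} (a0 a1 a2 a3 a4 a5 a6 a7 : α) :
    ![a0,a1,a2,a3,a4,a5,a6,a7] (6 : Fin 8) = a6 := rfl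
@[simp] lemma cons_val_seven' {α : Type*} (a0 a1 a2 a3 a4 a5 a6 a7 : α) :
    ![a0,a1,a2,a3,a4,a5,a6,a7] (7 : Fin 8) = a7 := rfl

lemma phi_apply (p : P2) (k : Fin 8) :
    phi p k = ![lcoeff ℚ (dd 0 0), lcoeff ℚ (dd 1 0), lcoeff ℚ (dd 2 0), lcoeff ℚ (dd 3 0),
      lcoeff ℚ (dd 4 0) + (1/2 : ℚ) • lcoeff ℚ (dd 1 1),
      lcoeff ℚ (dd 5 0) + (1/2 : ℚ) • lcoeff ℚ (dd 2 1),
      lcoeff ℚ (dd 6 0) + (1/2 : ℚ) • lcoeff ℚ (dd 3 1),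
      lcoeff ℚ (dd 0 1)] k p := rfl

lemma phiX0 (h : P2) :
    phi (X 0 * h) = ![0, phi h 0, phi h 1, phi h 2, phi h 3 + (1/2) * phi h 7,
      phi h 4, phi h 5, 0] := by
  funext k
  fin_cases k <;>
    simp [phi_apply, lcoeff_apply, coeff_X0_mul_zero,
      coeff_X0_mul 0, coeff_X0_mul 1, coeff_X0_mul 2, coeff_X0_mul 3,
      coeff_X0_mul 4, coeff_X0_mul 5]

lemma phiX1 (h : P2) :
    phi (X 1 * h) = ![0, 0, 0, 0, (1/2) * phi h 1, (1/2) * phi h 2, (1/2) * phi h 3,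
      phi h 0] := by
  funext k
  fin_cases k <;>
    simp [phi_apply, lcoeff_apply, coeff_X1_mul_zero,
      coeff_X1_mul 0 0, coeff_X1_mul 1 0, coeff_X1_mul 2 0, coeff_X1_mul 3 0]

lemma phi_one : phi 1 = ![1,0,0,0,0,0,0,0] := by
  funext k
  fin_cases k <;>
    simp [phi_apply, lcoeff_apply, coeff_one, dd_eq_iff, dd_zero, ← dd_zero, dd_eq_iff]

lemma phiP1 : phi (X 0) = ![0,1,0,0,0,0,0,0] := by
  have : (X 0 : P2) = X 0 * 1 := by ring
  rw [this, phiX0, phi_one]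
  funext k; fin_cases k <;> norm_num <;> rfl
lemma phiP2 : phi (X 0 ^ 2) = ![0,0,1,0,0,0,0,0] := by
  have : (X 0 : P2) ^ 2 = X 0 * X 0 := by ring
  rw [this, phiX0, phiP1]
  funext k; fin_cases k <;> norm_num <;> rfl
lemma phiP3 : phi (X 0 ^ 3) = ![0,0,0,1,0,0,0,0] := by
  have : (X 0 : P2) ^ 3 = X 0 * X 0 ^ 2 := by ring
  rw [this, phiX0, phiP2]
  funext k; fin_cases k <;> norm_num <;> rfl
lemma phiP4 : phi (X 0 ^ 4) = ![0,0,0,0,1,0,0,0] := by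
  have : (X 0 : P2) ^ 4 = X 0 * X 0 ^ 3 := by ring
  rw [this, phiX0, phiP3]
  funext k; fin_cases k <;> norm_num <;> rfl
lemma phiP5 : phi (X 0 ^ 5) = ![0,0,0,0,0,1,0,0] := by
  have : (X 0 : P2) ^ 5 = X 0 * X 0 ^ 4 := by ring
  rw [this, phiX0, phiP4]
  funext k; fin_cases k <;> norm_num <;> rfl
lemma phiP6 : phi (X 0 ^ 6) = ![0,0,0,0,0,0,1,0] := by
  have : (X 0 : P2) ^ 6 = X 0 * X 0 ^ 5 := by ring
  rw [this, phiX0, phiP5]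
  funext k; fin_cases k <;> norm_num <;> rfl
lemma phiY : phi (X 1) = ![0,0,0,0,0,0,0,1] := by
  have : (X 1 : P2) = X 1 * 1 := by ring
  rw [this, phiX1, phi_one]
  funext k; fin_cases k <;> norm_num <;> rfl
lemma phiXY : phi (X 0 * X 1) = ![0,0,0,0,1/2,0,0,0] := by
  rw [phiX0, phiY]
  funext k; fin_cases k <;> norm_num <;> rfl
lemma phiX2Y : phi (X 0 ^ 2 * X 1) = ![0,0,0,0,0,1/2,0,0] := by
  have : (X 0 : P2) ^ 2 * X 1 = X 0 * (X 0 * X 1) := by ring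
  rw [this, phiX0, phiXY]
  funext k; fin_cases k <;> norm_num <;> rfl
lemma phiX3Y : phi (X 0 ^ 3 * X 1) = ![0,0,0,0,0,0,1/2,0] := by
  have : (X 0 : P2) ^ 3 * X 1 = X 0 * (X 0 ^ 2 * X 1) := by ring
  rw [this, phiX0, phiX2Y]
  funext k; fin_cases k <;> norm_num <;> rfl
lemma phiY2 : phi (X 1 ^ 2) = 0 := by
  have : (X 1 : P2) ^ 2 = X 1 * X 1 := by ring
  rw [this, phiX1, phiY]
  funext k; fin_cases k <;> norm_num <;> rfl

noncomputable def Fp : P2 := X 1 ^ 2 - 4 * X 0 ^ 3 * X 1 + 2 * X 0 ^ 6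
noncomputable def Gp : P2 := 2 * X 0 * X 1 - X 0 ^ 4

lemma phiF : phi Fp = 0 := by
  have e : Fp = X 1 ^ 2 - (4:ℚ) • (X 0 ^ 3 * X 1) + (2:ℚ) • (X 0 ^ 6) := by
    rw [smul_eq_C_mul, smul_eq_C_mul, map_ofNat, map_ofNat, Fp]; ring
  rw [e, map_add, map_sub, map_smul, map_smul, phiY2, phiX3Y, phiP6]
  funext k; fin_cases k <;> norm_num
lemma phiG : phi Gp = 0 := by
  have e : Gp = (2:ℚ) • (X 0 * X 1) - X 0 ^ 4 := by
    rw [smul_eq_C_mul, map_ofNat, Gp]; ring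
  rw [e, map_sub, map_smul, phiXY, phiP4]
  funext k; fin_cases k <;> norm_num

lemma phi_mul_eq_zero (q : P2) (hq : phi q = 0) : ∀ p : P2, phi (p * q) = 0 := by
  intro p
  induction p using MvPolynomial.induction_on with
  | C a =>
    rw [← smul_eq_C_mul, map_smul, hq, smul_zero]
  | add p r hp hr =>
    rw [add_mul, map_add, hp, hr, add_zero]
  | mul_X p i hp =>
    have e : p * X i * q = X i * (p * q) := by ring
    rw [e]
    fin_cases i <;> simp only [Fin.isValue, Fin.mk_zero, Fin.mk_one]
    · rw [phiX0, hp]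
      funext k; fin_cases k <;> norm_num
    · rw [phiX1, hp]
      funext k; fin_cases k <;> norm_num

lemma phi_vanish : ∀ h ∈ Ideal.span ({Fp, Gp} : Set P2), phi h = 0 := by
  intro h hh
  rw [Ideal.mem_span_pair] at hh
  obtain ⟨a, b, rfl⟩ := hh
  rw [map_add, phi_mul_eq_zero Fp phiF a, phi_mul_eq_zero Gp phiG b, add_zero]

noncomputable def II : Ideal P2 := Ideal.span ({Fp, Gp} : Set P2)

noncomputable def mm : Fin 8 → P2 :=
  ![1, X 0, X 0 ^ 2, X 0 ^ 3, X 0 ^ 4, X 0 ^ 5, X 0 ^ 6, X 1]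

noncomputable def bb : Fin 8 → (P2 ⧸ II) := fun k => Ideal.Quotient.mk II (mm k)

lemma hG_mem : Gp ∈ II := Ideal.subset_span (by simp)
lemma hF_mem : Fp ∈ II := Ideal.subset_span (by simp)

lemma hx7_mem : (X 0 ^ 7 : P2) ∈ II := by
  rw [II, Ideal.mem_span_pair]
  exact ⟨4 * X 0, 7 * X 0 ^ 3 - 2 * X 1, by simp only [Fp, Gp]; ring⟩

lemma hy2_mem : (X 1 ^ 2 : P2) ∈ II := by
  rw [II, Ideal.mem_span_pair]
  exact ⟨1, 2 * X 0 ^ 2, by simp only [Fp, Gp]; ring⟩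

lemma q7 : Ideal.Quotient.mk II (X 0 ^ 7 : P2) = 0 :=
  Ideal.Quotient.eq_zero_iff_mem.mpr hx7_mem
lemma qy2 : Ideal.Quotient.mk II (X 1 ^ 2 : P2) = 0 :=
  Ideal.Quotient.eq_zero_iff_mem.mpr hy2_mem

/-- `2·x^k·y = x^(k+3)` in the quotient. -/
lemma rel (k : ℕ) :
    (2 : P2 ⧸ II) * Ideal.Quotient.mk II (X 0 ^ (k+1) * X 1) =
      Ideal.Quotient.mk II (X 0 ^ (k+4) : P2) := by
  have h0 : Ideal.Quotient.mk II (X 0 ^ k * Gp) = 0 :=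
    Ideal.Quotient.eq_zero_iff_mem.mpr (II.mul_mem_left _ hG_mem)
  have e : (X 0 ^ k * Gp : P2) = 2 * (X 0 ^ (k+1) * X 1) - X 0 ^ (k+4) := by
    simp only [Gp]; ring
  rw [e, map_sub, map_mul, sub_eq_zero, map_ofNat] at h0
  exact h0

lemma bb_indep : LinearIndependent ℚ bb := by
  rw [Fintype.linearIndependent_iff]
  intro c hc k
  have hmem : (∑ i, c i • mm i) ∈ II := by
    rw [← Ideal.Quotient.eq_zero_iff_mem]
    have : Ideal.Quotient.mk II (∑ i, c i • mm i)
        = ∑ i, c i • Ideal.Quotient.mk II (mm i) := by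
      rw [show (Ideal.Quotient.mk II : P2 → P2 ⧸ II) = (Ideal.Quotient.mkₐ ℚ II : P2 → P2 ⧸ II)
        from rfl]
      rw [map_sum]
      simp only [map_smul]
    rw [this]
    exact hc
  have h0 := phi_vanish _ hmem
  rw [map_sum] at h0
  simp only [map_smul] at h0
  have h1 : (∑ i, c i • phi (mm i)) = c 0 • ![1,0,0,0,0,0,0,0] + c 1 • ![0,1,0,0,0,0,0,0]
      + c 2 • ![0,0,1,0,0,0,0,0] + c 3 • ![0,0,0,1,0,0,0,0] + c 4 • ![0,0,0,0,1,0,0,0]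
      + c 5 • ![0,0,0,0,0,1,0,0] + c 6 • ![0,0,0,0,0,0,1,0] + c 7 • ![0,0,0,0,0,0,0,1] := by
    rw [Fin.sum_univ_eight]
    simp only [mm, Matrix.cons_val_zero, Matrix.cons_val_one, Matrix.head_cons,
      Matrix.cons_val_two, Matrix.cons_val_three, Matrix.cons_val_four,
      cons_val_five', cons_val_six', cons_val_seven', Matrix.tail_cons,
      phi_one, phiP1, phiP2, phiP3, phiP4, phiP5, phiP6, phiY]
  rw [h1] at h0
  have hk := congrFun h0 k
  fin_cases k <;> simpa using hk

noncomputable abbrev SS : Submodule ℚ (P2 ⧸ II) := Submodule.span ℚ (Set.range bb)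

lemma hmkS (k : Fin 8) : Ideal.Quotient.mk II (mm k) ∈ SS :=
  Submodule.subset_span ⟨k, rfl⟩

lemma half_mem {v w : P2 ⧸ II} (h : (2 : P2 ⧸ II) * v = w) (hw : w ∈ SS) : v ∈ SS := by
  have h2 : (2:ℚ) • v = 2 * v := by
    rw [show (2:ℚ) = ((2:ℕ):ℚ) by norm_num, Nat.cast_smul_eq_nsmul, two_smul, two_mul]
  have hv : v = (1/2:ℚ) • w := by rw [← h, ← h2, smul_smul]; norm_num
  rw [hv]
  exact SS.smul_mem _ hw

lemma q78 (n : ℕ) : Ideal.Quotient.mk II (X 0 ^ (7+n) : P2) = 0 := by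
  refine Ideal.Quotient.eq_zero_iff_mem.mpr ?_
  have h := II.mul_mem_left (X 0 ^ n) hx7_mem
  rw [show (X 0 ^ n * X 0 ^ 7 : P2) = X 0 ^ (7+n) by ring] at h
  exact h

lemma closure0 : ∀ v ∈ SS, v * Ideal.Quotient.mk II (X 0) ∈ SS := by
  intro v hv
  induction hv using Submodule.span_induction with
  | mem x hx =>
    obtain ⟨k, rfl⟩ := hx
    fin_cases k
    · show bb 0 * Ideal.Quotient.mk II (X 0) ∈ SS
      have e : bb 0 * Ideal.Quotient.mk II (X 0) = Ideal.Quotient.mk II (X 0 : P2) := by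
        show Ideal.Quotient.mk II (1 : P2) * _ = _
        rw [← map_mul, one_mul]
      rw [e]; exact hmkS 1
    · show bb 1 * Ideal.Quotient.mk II (X 0) ∈ SS
      have e : bb 1 * Ideal.Quotient.mk II (X 0) = Ideal.Quotient.mk II (X 0 ^ 2 : P2) := by
        show Ideal.Quotient.mk II (X 0 : P2) * _ = _
        rw [← map_mul]; exact congrArg _ (by ring)
      rw [e]; exact hmkS 2
    · show bb 2 * Ideal.Quotient.mk II (X 0) ∈ SS
      have e : bb 2 * Ideal.Quotient.mk II (X 0) = Ideal.Quotient.mk II (X 0 ^ 3 : P2) := by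
        show Ideal.Quotient.mk II (X 0 ^ 2 : P2) * _ = _
        rw [← map_mul]; exact congrArg _ (by ring)
      rw [e]; exact hmkS 3
    · show bb 3 * Ideal.Quotient.mk II (X 0) ∈ SS
      have e : bb 3 * Ideal.Quotient.mk II (X 0) = Ideal.Quotient.mk II (X 0 ^ 4 : P2) := by
        show Ideal.Quotient.mk II (X 0 ^ 3 : P2) * _ = _
        rw [← map_mul]; exact congrArg _ (by ring)
      rw [e]; exact hmkS 4
    · show bb 4 * Ideal.Quotient.mk II (X 0) ∈ SS
      have e : bb 4 * Ideal.Quotient.mk II (X 0) = Ideal.Quotient.mk II (X 0 ^ 5 : P2) := by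
        show Ideal.Quotient.mk II (X 0 ^ 4 : P2) * _ = _
        rw [← map_mul]; exact congrArg _ (by ring)
      rw [e]; exact hmkS 5
    · show bb 5 * Ideal.Quotient.mk II (X 0) ∈ SS
      have e : bb 5 * Ideal.Quotient.mk II (X 0) = Ideal.Quotient.mk II (X 0 ^ 6 : P2) := by
        show Ideal.Quotient.mk II (X 0 ^ 5 : P2) * _ = _
        rw [← map_mul]; exact congrArg _ (by ring)
      rw [e]; exact hmkS 6
    · show bb 6 * Ideal.Quotient.mk II (X 0) ∈ SS
      have e : bb 6 * Ideal.Quotient.mk II (X 0) = Ideal.Quotient.mk II (X 0 ^ 7 : P2) := by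
        show Ideal.Quotient.mk II (X 0 ^ 6 : P2) * _ = _
        rw [← map_mul]; exact congrArg _ (by ring)
      rw [e, q7]; exact SS.zero_mem
    · show bb 7 * Ideal.Quotient.mk II (X 0) ∈ SS
      have e : bb 7 * Ideal.Quotient.mk II (X 0)
          = Ideal.Quotient.mk II (X 0 ^ 1 * X 1 : P2) := by
        show Ideal.Quotient.mk II (X 1 : P2) * _ = _
        rw [← map_mul]; exact congrArg _ (by ring)
      rw [e]
      exact half_mem (rel 0) (hmkS 4)
  | zero => rw [zero_mul]; exact SS.zero_mem
  | add x y hx hy ihx ihy => rw [add_mul]; exact SS.add_mem ihx ihy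
  | smul a x hx ihx =>
    rw [show (a • x) * Ideal.Quotient.mk II (X 0)
      = a • (x * Ideal.Quotient.mk II (X 0)) from smul_mul_assoc a x _]
    exact SS.smul_mem a ihx

lemma closure1 : ∀ v ∈ SS, v * Ideal.Quotient.mk II (X 1) ∈ SS := by
  intro v hv
  induction hv using Submodule.span_induction with
  | mem x hx =>
    obtain ⟨k, rfl⟩ := hx
    fin_cases k
    · show bb 0 * Ideal.Quotient.mk II (X 1) ∈ SS
      have e : bb 0 * Ideal.Quotient.mk II (X 1) = Ideal.Quotient.mk II (X 1 : P2) := by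
        show Ideal.Quotient.mk II (1 : P2) * _ = _
        rw [← map_mul, one_mul]
      rw [e]; exact hmkS 7
    · show bb 1 * Ideal.Quotient.mk II (X 1) ∈ SS
      have e : bb 1 * Ideal.Quotient.mk II (X 1)
          = Ideal.Quotient.mk II (X 0 ^ 1 * X 1 : P2) := by
        show Ideal.Quotient.mk II (X 0 : P2) * _ = _
        rw [← map_mul]; exact congrArg _ (by ring)
      rw [e]; exact half_mem (rel 0) (hmkS 4)
    · show bb 2 * Ideal.Quotient.mk II (X 1) ∈ SS
      have e : bb 2 * Ideal.Quotient.mk II (X 1)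
          = Ideal.Quotient.mk II (X 0 ^ 2 * X 1 : P2) := by
        show Ideal.Quotient.mk II (X 0 ^ 2 : P2) * _ = _
        rw [← map_mul]
      rw [e]; exact half_mem (rel 1) (hmkS 5)
    · show bb 3 * Ideal.Quotient.mk II (X 1) ∈ SS
      have e : bb 3 * Ideal.Quotient.mk II (X 1)
          = Ideal.Quotient.mk II (X 0 ^ 3 * X 1 : P2) := by
        show Ideal.Quotient.mk II (X 0 ^ 3 : P2) * _ = _
        rw [← map_mul]
      rw [e]; exact half_mem (rel 2) (hmkS 6)
    · show bb 4 * Ideal.Quotient.mk II (X 1) ∈ SS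
      have e : bb 4 * Ideal.Quotient.mk II (X 1)
          = Ideal.Quotient.mk II (X 0 ^ 4 * X 1 : P2) := by
        show Ideal.Quotient.mk II (X 0 ^ 4 : P2) * _ = _
        rw [← map_mul]
      rw [e]
      refine half_mem (rel 3) ?_
      rw [show (3 + 4 : ℕ) = 7 + 0 from rfl, q78 0]
      exact SS.zero_mem
    · show bb 5 * Ideal.Quotient.mk II (X 1) ∈ SS
      have e : bb 5 * Ideal.Quotient.mk II (X 1)
          = Ideal.Quotient.mk II (X 0 ^ 5 * X 1 : P2) := by
        show Ideal.Quotient.mk II (X 0 ^ 5 : P2) * _ = _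
        rw [← map_mul]
      rw [e]
      refine half_mem (rel 4) ?_
      rw [show (4 + 4 : ℕ) = 7 + 1 from rfl, q78 1]
      exact SS.zero_mem
    · show bb 6 * Ideal.Quotient.mk II (X 1) ∈ SS
      have e : bb 6 * Ideal.Quotient.mk II (X 1)
          = Ideal.Quotient.mk II (X 0 ^ 6 * X 1 : P2) := by
        show Ideal.Quotient.mk II (X 0 ^ 6 : P2) * _ = _
        rw [← map_mul]
      rw [e]
      refine half_mem (rel 5) ?_
      rw [show (5 + 4 : ℕ) = 7 + 2 from rfl, q78 2]
      exact SS.zero_mem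
    · show bb 7 * Ideal.Quotient.mk II (X 1) ∈ SS
      have e : bb 7 * Ideal.Quotient.mk II (X 1)
          = Ideal.Quotient.mk II (X 1 ^ 2 : P2) := by
        show Ideal.Quotient.mk II (X 1 : P2) * _ = _
        rw [← map_mul]; exact congrArg _ (by ring)
      rw [e, qy2]; exact SS.zero_mem
  | zero => rw [zero_mul]; exact SS.zero_mem
  | add x y hx hy ihx ihy => rw [add_mul]; exact SS.add_mem ihx ihy
  | smul a x hx ihx =>
    rw [show (a • x) * Ideal.Quotient.mk II (X 1)
      = a • (x * Ideal.Quotient.mk II (X 1)) from smul_mul_assoc a x _]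
    exact SS.smul_mem a ihx

lemma span_top : SS = ⊤ := by
  rw [Submodule.eq_top_iff']
  intro x
  obtain ⟨p, rfl⟩ := Ideal.Quotient.mk_surjective (I := II) x
  induction p using MvPolynomial.induction_on with
  | C a =>
    have e : Ideal.Quotient.mk II (C a) = a • Ideal.Quotient.mk II (1 : P2) := by
      rw [show (C a : P2) = a • 1 from by rw [smul_eq_C_mul, mul_one]]
      rw [show (Ideal.Quotient.mk II : P2 → P2 ⧸ II) = (Ideal.Quotient.mkₐ ℚ II : P2 → P2 ⧸ II)
        from rfl, map_smul]
    rw [e]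
    exact SS.smul_mem a (hmkS 0)
  | add p q hp hq =>
    rw [map_add]; exact SS.add_mem hp hq
  | mul_X p i hp =>
    rw [map_mul]
    fin_cases i
    · exact closure0 _ hp
    · exact closure1 _ hp

noncomputable def bbBasis : Module.Basis (Fin 8) ℚ (P2 ⧸ II) :=
  Module.Basis.mk bb_indep (le_of_eq span_top.symm)

lemma finrank_II : Module.finrank ℚ (P2 ⧸ II) = 8 := by
  rw [Module.finrank_eq_card_basis bbBasis, Fintype.card_fin]


/-- for the Landau–Ginzburg potential
`V₇ = x₁x₃² - x₁⁴x₃ + (2/7)x₁⁷` of `OGr(4,8)` (with `x₁ = X 0`, `x₃ = X 1`),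
we have `∂V₇/∂x₃ = 2x₁x₃ - x₁⁴`, `∂V₇/∂x₁ = x₃² - 4x₁³x₃ + 2x₁⁶`, and the
Jacobi ring `ℚ[x₁,x₃]/(∂V₇/∂x₁, ∂V₇/∂x₃)` has dimension 8 over ℚ. -/
theorem OGr48_potential :
    let x1 : MvPolynomial (Fin 2) ℚ := X 0
    let x3 : MvPolynomial (Fin 2) ℚ := X 1
    let V7 : MvPolynomial (Fin 2) ℚ := x1 * x3 ^ 2 - x1 ^ 4 * x3 + C (2/7 : ℚ) * x1 ^ 7
    pderiv 1 V7 = 2 * x1 * x3 - x1 ^ 4 ∧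
    pderiv 0 V7 = x3 ^ 2 - 4 * x1 ^ 3 * x3 + 2 * x1 ^ 6 ∧
    Module.finrank ℚ
      (MvPolynomial (Fin 2) ℚ ⧸ Ideal.span {pderiv 0 V7, pderiv 1 V7}) = 8 := by
  intro x1 x3 V7
  have h7 : (C (2/7:ℚ) : MvPolynomial (Fin 2) ℚ) * 7 = 2 := by
    rw [← map_ofNat (C : ℚ →+* MvPolynomial (Fin 2) ℚ) 7,
      ← map_ofNat (C : ℚ →+* MvPolynomial (Fin 2) ℚ) 2, ← C_mul]
    norm_num
  have h1 : pderiv 1 V7 = 2 * x1 * x3 - x1 ^ 4 := by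
    simp only [V7, x1, x3, map_add, map_sub, Derivation.leibniz, Derivation.leibniz_pow,
      pderiv_X_self, pderiv_X_of_ne (by decide : (0:Fin 2) ≠ 1),
      pderiv_X_of_ne (by decide : (1:Fin 2) ≠ 0), pderiv_C, smul_eq_mul]
    ring
  have h0 : pderiv 0 V7 = x3 ^ 2 - 4 * x1 ^ 3 * x3 + 2 * x1 ^ 6 := by
    simp only [V7, x1, x3, map_add, map_sub, Derivation.leibniz, Derivation.leibniz_pow,
      pderiv_X_self, pderiv_X_of_ne (by decide : (0:Fin 2) ≠ 1),
      pderiv_X_of_ne (by decide : (1:Fin 2) ≠ 0), pderiv_C, smul_eq_mul]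
    linear_combination (X 0 : MvPolynomial (Fin 2) ℚ) ^ 6 * h7
  refine ⟨h1, h0, ?_⟩
  have hF' : pderiv 0 V7 = Fp := by rw [h0]; rfl
  have hG' : pderiv 1 V7 = Gp := by rw [h1]; rfl
  rw [hF', hG']
  exact finrank_II
end

section
/- Define the sequence a_n by a_1 = 1 and the Segner-type recurrence obtained from the relations x_i^2 + 2Σ_{k=1}^{i-1}(-1)^k x_{i+k}x_{i-k} + (-1)^i x_{2i} = 0 after setting x_1 = u and all other odd-indexed variables to 0; then the resulting even-indexed values satisfy x_{2n} = ±C_{n-1} u^{2n} where C_n is the n-th Catalan number, i.e., |x_{2n}|/u^{2n} satisfies the Catalan recurrence C_n = Σ_{i=0}^{n-1} C_i C_{n-1-i}. -/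
/-!
Put `wₚ = x_{2p}`. For `i ≥ 2` every term `x_{i+k} x_{i-k}` of the `i`-th relation with odd
indices vanishes, and after unfolding the symmetric sum `∑_{a=1}^{2i-1} (-1)^{a-i} x_a x_{2i-a}`
the relation becomes `wᵢ = -∑_{p+q=i, p,q ≥ 1} w_p w_q`, while the first relation gives
`w₁ = u²`. This is Segner's recurrence: `wₙ = -Cₙ₋₁ (-u²)ⁿ` solves it, because
`(-Cₚ₋₁ (-u²)ᵖ)(-C_{q-1} (-u²)^q) = Cₚ₋₁ C_{q-1} (-u²)^{p+q}` and `Cₙ = ∑_{p+q=n-1} Cₚ C_q`.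
-/

open Polynomial Finset

theorem sum_range_two_mul_eq_even_add_odd {M : Type*} [AddCommMonoid M] (f : ℕ → M) (n : ℕ) :
    ∑ a ∈ range (2 * n), f a = ∑ k ∈ range n, f (2 * k) + ∑ k ∈ range n, f (2 * k + 1) := by
  induction n with
  | zero => simp
  | succ n ih =>
    rw [show 2 * (n + 1) = 2 * n + 1 + 1 by ring, sum_range_succ, sum_range_succ, ih,
      sum_range_succ, sum_range_succ]
    abel

theorem sum_range_symm_eq_center_add_two_nsmul {M : Type*} [AddCommMonoid M] (h : ℕ → M)
    {i : ℕ} (hi : 1 ≤ i) (hsymm : ∀ a ≤ 2 * i, h (2 * i - a) = h a) :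
    ∑ a ∈ range (2 * i - 1), h (a + 1) = h i + 2 • ∑ k ∈ range (i - 1), h (i + (k + 1)) := by
  obtain ⟨j, rfl⟩ : ∃ j, i = j + 1 := ⟨i - 1, by omega⟩
  have hleft : ∑ a ∈ range j, h (a + 1) = ∑ k ∈ range j, h (j + 1 + (k + 1)) := by
    rw [← sum_range_reflect]
    refine sum_congr rfl fun k hk => ?_
    rw [mem_range] at hk
    rw [← hsymm (j + 1 + (k + 1)) (by omega)]
    congr 1
    omega
  rw [show 2 * (j + 1) - 1 = j + 1 + j by omega, sum_range_add, sum_range_succ, hleft,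
    Nat.add_sub_cancel, two_nsmul]
  simp only [add_assoc]
  abel

section CommRing

variable {R : Type*} [CommRing R]

theorem relation_sum_eq_of_odd_eq_zero (x : ℕ → R) (hodd : ∀ m, 1 ≤ m → x (2 * m + 1) = 0)
    {i : ℕ} (hi : 2 ≤ i) :
    x i ^ 2 + 2 * ∑ k ∈ range (i - 1), (-1 : R) ^ (k + 1) * (x (i + (k + 1)) * x (i - (k + 1)))
      = (-1) ^ i * ∑ p ∈ range (i - 1), x (2 * (p + 1)) * x (2 * (i - 1 - p)) := by
  -- `h a` is the term of the relation with `k = a - i`, extended to all `a ≤ 2i`.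
  set h : ℕ → R := fun a => (-1) ^ (a + i) * (x a * x (2 * i - a))
  have hsymm : ∀ a ≤ 2 * i, h (2 * i - a) = h a := by
    intro a ha
    have hsign : (-1 : R) ^ (2 * i - a + i) = (-1) ^ (a + i) :=
      neg_one_pow_congr (by simp only [Nat.even_iff]; omega)
    simp only [h]
    rw [Nat.sub_sub_self ha, hsign, mul_comm (x (2 * i - a))]
  have hcenter : h i = x i ^ 2 := by
    simp only [h]
    rw [← two_mul, pow_mul, neg_one_sq, one_pow, one_mul, sq, show 2 * i - i = i by omega]
  have hside (k : ℕ) : h (i + (k + 1)) = (-1) ^ (k + 1) * (x (i + (k + 1)) * x (i - (k + 1))) := by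
    simp only [h]
    rw [show i + (k + 1) + i = k + 1 + 2 * i by omega, pow_add, pow_mul, neg_one_sq, one_pow,
      mul_one, show 2 * i - (i + (k + 1)) = i - (k + 1) by omega]
  have heven (t : ℕ) : h (2 * t) = (-1) ^ i * (x (2 * t) * x (2 * (i - t))) := by
    simp only [h]
    rw [pow_add, pow_mul, neg_one_sq, one_pow, one_mul, Nat.mul_sub]
  have hodd_terms : ∑ t ∈ range i, h (2 * t + 1) = 0 := by
    refine sum_eq_zero fun t ht => ?_
    rw [mem_range] at ht
    obtain rfl | ht0 := Nat.eq_zero_or_pos t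
    · simp only [h]
      rw [show 2 * i - (2 * 0 + 1) = 2 * (i - 1) + 1 by omega, hodd (i - 1) (by omega)]
      simp only [mul_zero]
    · simp only [h, hodd t ht0, zero_mul, mul_zero]
  have hshift (f : ℕ → R) (n : ℕ) (hn : 1 ≤ n) :
      ∑ a ∈ range n, f a = ∑ a ∈ range (n - 1), f (a + 1) + f 0 := by
    rw [← sum_range_succ', Nat.sub_add_cancel hn]
  calc x i ^ 2 + 2 * ∑ k ∈ range (i - 1), (-1 : R) ^ (k + 1) * (x (i + (k + 1)) * x (i - (k + 1)))
      = ∑ a ∈ range (2 * i - 1), h (a + 1) := by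
        rw [sum_range_symm_eq_center_add_two_nsmul h (by omega) hsymm, hcenter, nsmul_eq_mul,
          Nat.cast_ofNat]
        simp only [hside]
    _ = ∑ a ∈ range (2 * i), h a - h 0 := by
        rw [hshift h _ (by omega), add_sub_cancel_right]
    _ = ∑ t ∈ range i, h (2 * t) - h 0 := by
        rw [sum_range_two_mul_eq_even_add_odd, hodd_terms, add_zero]
    _ = ∑ t ∈ range (i - 1), h (2 * (t + 1)) := by
        rw [hshift (fun t => h (2 * t)) i (by omega), add_sub_cancel_right]
    _ = (-1) ^ i * ∑ p ∈ range (i - 1), x (2 * (p + 1)) * x (2 * (i - 1 - p)) := by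
        rw [mul_sum]
        refine sum_congr rfl fun p _ => ?_
        rw [heven, show i - (p + 1) = i - 1 - p by omega]

theorem eq_catalan_of_segner_rec (w : ℕ → R) (c : R) (h1 : w 1 = c)
    (hrec : ∀ i, 2 ≤ i → w i = -∑ p ∈ range (i - 1), w (p + 1) * w (i - 1 - p)) :
    ∀ n, 1 ≤ n → w n = -(catalan (n - 1) : R) * (-c) ^ n := by
  intro n
  induction n using Nat.strong_induction_on with
  | _ n ih =>
  intro hn
  obtain rfl | hn2 : n = 1 ∨ 2 ≤ n := by omega
  · simp [h1]
  obtain ⟨m, rfl⟩ : ∃ m, n = m + 2 := ⟨n - 2, by omega⟩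
  have hterm : ∀ p ∈ range (m + 1), w (p + 1) * w (m + 1 - p)
      = (catalan p * catalan (m - p) : R) * (-c) ^ (m + 2) := by
    intro p hp
    rw [mem_range] at hp
    rw [ih (p + 1) (by omega) (by omega), ih (m + 1 - p) (by omega) (by omega),
      show m + 1 - p - 1 = m - p by omega, Nat.add_sub_cancel]
    have hpow : (-c) ^ (p + 1) * (-c) ^ (m + 1 - p) = (-c) ^ (m + 2) := by
      rw [← pow_add]; congr 1; omega
    linear_combination (catalan p * catalan (m - p) : R) * hpow
  rw [hrec _ hn2, show m + 2 - 1 = m + 1 by omega, sum_congr rfl hterm, ← sum_mul, catalan_succ',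
    Finset.Nat.sum_antidiagonal_eq_sum_range_succ (fun a b => catalan a * catalan b)]
  push_cast
  ring

end CommRing

theorem segner_catalan_general (x : ℕ → Polynomial ℚ)
    (h1 : x 1 = X) (hoddzero : ∀ m, 1 ≤ m → x (2 * m + 1) = 0)
    (hrel : ∀ i, 1 ≤ i →
      (x i) ^ 2
        + 2 * ∑ k ∈ Finset.range (i - 1), (-1 : Polynomial ℚ) ^ (k + 1)
            * (x (i + (k + 1)) * x (i - (k + 1)))
        + (-1 : Polynomial ℚ) ^ i * x (2 * i) = 0) :
    ∀ n, 1 ≤ n → x (2 * n) = C ((-1 : ℚ) ^ (n - 1) * catalan (n - 1)) * X ^ (2 * n) := by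
  have hx2 : x (2 * 1) = X ^ 2 := by
    have h := hrel 1 le_rfl
    simp only [h1, Nat.sub_self, range_zero, sum_empty, mul_zero, add_zero, pow_one] at h
    linear_combination -h
  have hrec (i : ℕ) (hi : 2 ≤ i) :
      x (2 * i) = -∑ p ∈ range (i - 1), x (2 * (p + 1)) * x (2 * (i - 1 - p)) := by
    have h := hrel i (by omega)
    rw [relation_sum_eq_of_odd_eq_zero x hoddzero hi, ← mul_add,
      (isUnit_neg_one.pow i).mul_right_eq_zero] at h
    linear_combination h
  intro n hn
  obtain ⟨m, rfl⟩ : ∃ m, n = m + 1 := ⟨n - 1, by omega⟩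
  rw [eq_catalan_of_segner_rec (fun p => x (2 * p)) (X ^ 2) hx2 hrec (m + 1) hn,
    Nat.add_sub_cancel]
  simp only [map_mul, map_pow, map_neg, map_one, map_natCast]
  ring

/-- setting `x₀ = 1`, `x₁ = u` and all other odd-indexed variables
to `0` in the defining relations
`xᵢ² + 2∑_{k=1}^{i-1}(-1)^k x_{i+k}x_{i-k} + (-1)^i x_{2i} = 0` of
`H*(OGr(n,2n))` yields Segner's recurrence: the resulting even-indexed values
are `x_{2n} = (-1)^{n-1} C_{n-1} u^{2n}`, where `Cₙ` is the `n`-th Catalan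
number. -/
theorem segner_catalan (x : ℕ → Polynomial ℚ)
    (h0 : x 0 = 1) (h1 : x 1 = X) (hoddzero : ∀ m, 1 ≤ m → x (2 * m + 1) = 0)
    (hrel : ∀ i, 1 ≤ i →
      (x i) ^ 2
        + 2 * ∑ k ∈ Finset.range (i - 1), (-1 : Polynomial ℚ) ^ (k + 1)
            * (x (i + (k + 1)) * x (i - (k + 1)))
        + (-1 : Polynomial ℚ) ^ i * x (2 * i) = 0) :
    ∀ n, 1 ≤ n → x (2 * n) = C ((-1 : ℚ) ^ (n - 1) * catalan (n - 1)) * X ^ (2 * n) :=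
  segner_catalan_general x h1 hoddzero hrel
end

section
/- Let y_1,...,y_n be pairwise distinct nonzero complex numbers with y_i + y_j ≠ 0 for i ≠ j, and let f be a polynomial in n variables that is invariant under permutations and even sign changes of its variables, with deg f < binom(n,2); then Σ over sign vectors ε ∈ {±1}^n with ∏ε_i = 1 of f(ε_1y_1,...,ε_ny_n) / ∏_{1≤i<j≤n}(ε_iy_i + ε_jy_j) equals 0. -/
open MvPolynomial Finset


namespace OGrAux

variable {n : ℕ}

noncomputable def sflip (s : Fin n → ℂ) : MvPolynomial (Fin n) ℂ →ₐ[ℂ] MvPolynomial (Fin n) ℂ :=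
  aeval (fun i => C (s i) * X i)

lemma sflip_comp (s t : Fin n → ℂ) (p : MvPolynomial (Fin n) ℂ) :
    sflip t (sflip s p) = sflip (fun i => s i * t i) p := by
  have h : (sflip t).comp (sflip s) = sflip (fun i => s i * t i) := by
    apply MvPolynomial.algHom_ext
    intro i
    simp [sflip, mul_comm, mul_left_comm, mul_assoc]
  exact AlgHom.congr_fun h p

lemma rename_sflip (w : Equiv.Perm (Fin n)) (s : Fin n → ℂ) (p : MvPolynomial (Fin n) ℂ) :
    rename w (sflip s p) = sflip (fun i => s (w.symm i)) (rename w p) := by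
  have h : (rename (R := ℂ) w).comp (sflip s)
      = (sflip (fun i => s (w.symm i))).comp (rename w) := by
    apply MvPolynomial.algHom_ext
    intro i
    simp [sflip]
  exact AlgHom.congr_fun h p

lemma sflip_monomial (s : Fin n → ℂ) (d : Fin n →₀ ℕ) (a : ℂ) :
    sflip s (monomial d a) = monomial d ((∏ i, s i ^ d i) * a) := by
  rw [sflip, aeval_monomial]
  have h1 : (d.prod fun i k => (C (s i) * X i : MvPolynomial (Fin n) ℂ) ^ k)
      = C (∏ i ∈ d.support, s i ^ d i) * d.prod fun i k => (X i : MvPolynomial (Fin n) ℂ) ^ k := by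
    rw [Finsupp.prod, Finsupp.prod, map_prod, ← Finset.prod_mul_distrib]
    refine Finset.prod_congr rfl fun i _ => ?_
    rw [mul_pow, map_pow]
  have h2 : ∏ i ∈ d.support, s i ^ d i = ∏ i, s i ^ d i := by
    refine Finset.prod_subset (Finset.subset_univ _) fun i _ hi => ?_
    rw [Finsupp.notMem_support_iff.mp hi, pow_zero]
  rw [h1, h2, monomial_eq, algebraMap_eq, map_mul]
  ring

lemma coeff_sflip (s : Fin n → ℂ) (p : MvPolynomial (Fin n) ℂ) (c : Fin n →₀ ℕ) :
    coeff c (sflip s p) = (∏ i, s i ^ c i) * coeff c p := by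
  conv_lhs => rw [p.as_sum, map_sum]
  rw [coeff_sum]
  simp only [sflip_monomial, coeff_monomial]
  rw [Finset.sum_ite_eq' p.support c fun d => (∏ i, s i ^ d i) * coeff d p]
  by_cases h : c ∈ p.support
  · simp [h]
  · simp [h, MvPolynomial.notMem_support_iff.mp h]

lemma support_sflip_subset (s : Fin n → ℂ) (p : MvPolynomial (Fin n) ℂ) :
    (sflip s p).support ⊆ p.support := by
  intro c hc
  rw [MvPolynomial.mem_support_iff] at hc ⊢
  intro h
  rw [coeff_sflip, h, mul_zero] at hc
  exact hc rfl

lemma totalDegree_sflip_le (s : Fin n → ℂ) (p : MvPolynomial (Fin n) ℂ) :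
    (sflip s p).totalDegree ≤ p.totalDegree :=
  Finset.sup_mono (support_sflip_subset s p)


noncomputable def Vdm (n : ℕ) : MvPolynomial (Fin n) ℂ :=
  ∏ i : Fin n, ∏ j ∈ Finset.Ioi i, (X j - X i)

lemma eval_Vdm {n : ℕ} (x : Fin n → ℂ) :
    eval x (Vdm n) = (Matrix.vandermonde x).det := by
  rw [Matrix.det_vandermonde, Vdm]
  simp

lemma rename_swap_Vdm {n : ℕ} (k l : Fin n) (h : k ≠ l) :
    rename (Equiv.swap k l) (Vdm n) = - Vdm n := by
  apply MvPolynomial.funext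
  intro x
  rw [eval_rename, map_neg, eval_Vdm, eval_Vdm]
  have h1 : Matrix.vandermonde (x ∘ Equiv.swap k l)
      = (Matrix.vandermonde x).submatrix (Equiv.swap k l) id := by
    ext i j; rfl
  rw [h1, Matrix.det_permute, Equiv.Perm.sign_swap h]
  simp

lemma sum_range_card_le (T : Finset ℕ) : ∑ i ∈ Finset.range T.card, i ≤ ∑ x ∈ T, x := by
  induction T using Finset.strongInduction with
  | _ T ih =>
    rcases T.eq_empty_or_nonempty with rfl | hT
    · simp
    · have hmT : T.max' hT ∈ T := T.max'_mem hT
      have hsub : T.erase (T.max' hT) ⊂ T := Finset.erase_ssubset hmT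
      have h1 : (T.erase (T.max' hT)).card = T.card - 1 := Finset.card_erase_of_mem hmT
      have h2 : T.card ≤ T.max' hT + 1 := by
        have hs : T ⊆ Finset.range (T.max' hT + 1) :=
          fun x hx => Finset.mem_range.mpr (Nat.lt_succ_of_le (T.le_max' x hx))
        simpa using Finset.card_le_card hs
      have hc1 : 1 ≤ T.card := Finset.card_pos.mpr hT
      have key := ih _ hsub
      rw [h1] at key
      calc ∑ i ∈ Finset.range T.card, i
          = (∑ i ∈ Finset.range (T.card - 1), i) + (T.card - 1) := by
            conv_lhs => rw [show T.card = (T.card - 1) + 1 by omega]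
            rw [Finset.sum_range_succ]
        _ ≤ (∑ x ∈ T.erase (T.max' hT), x) + T.max' hT := by
            exact Nat.add_le_add key (by omega)
        _ = ∑ x ∈ T, x := by
            rw [add_comm, Finset.add_sum_erase _ (fun x => x) hmT]

lemma sum_injective_ge {n : ℕ} (d : Fin n → ℕ) (hd : Function.Injective d) :
    ∑ i ∈ Finset.range n, i ≤ ∑ i : Fin n, d i := by
  have h1 : ∑ i : Fin n, d i = ∑ x ∈ Finset.image d Finset.univ, x := by
    rw [Finset.sum_image (fun a _ b _ hab => hd hab)]
  have h2 : (Finset.image d Finset.univ).card = n := by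
    rw [Finset.card_image_of_injective _ hd, Finset.card_univ, Fintype.card_fin]
  rw [h1]
  calc ∑ i ∈ Finset.range n, i = ∑ i ∈ Finset.range (Finset.image d Finset.univ).card, i := by
        rw [h2]
    _ ≤ _ := sum_range_card_le _


lemma prod_pair_pow {n : ℕ} (k l : Fin n) (h : k ≠ l) (c : Fin n → ℕ) :
    ∏ i : Fin n, (if i = k ∨ i = l then (-1 : ℂ) else 1) ^ c i = (-1) ^ (c k + c l) := by
  rw [← Finset.mul_prod_erase Finset.univ _ (Finset.mem_univ k),
    ← Finset.mul_prod_erase _ _ (Finset.mem_erase.mpr ⟨h.symm, Finset.mem_univ l⟩)]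
  have hrest : ∏ i ∈ (Finset.univ.erase k).erase l,
      (if i = k ∨ i = l then (-1 : ℂ) else 1) ^ c i = 1 := by
    refine Finset.prod_eq_one fun i hi => ?_
    rw [Finset.mem_erase, Finset.mem_erase] at hi
    rw [if_neg (by tauto), one_pow]
  rw [hrest, if_pos (Or.inl rfl), if_pos (Or.inr rfl), mul_one, pow_add]

lemma key_vanish {n : ℕ} (P : MvPolynomial (Fin n) ℂ)
    (hswap : ∀ k l : Fin n, k ≠ l → rename (Equiv.swap k l) P = -P)
    (hflip : ∀ k l : Fin n, k ≠ l →
      sflip (fun i => if i = k ∨ i = l then (-1 : ℂ) else 1) P = P)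
    (hdeg : P.totalDegree < n * (n - 1)) : P = 0 := by
  by_contra hP
  obtain ⟨c, hc⟩ : P.support.Nonempty := by
    rw [Finset.nonempty_iff_ne_empty, Ne, MvPolynomial.support_eq_empty]; exact hP
  have hcoeff : coeff c P ≠ 0 := MvPolynomial.mem_support_iff.mp hc
  have hdist : ∀ k l : Fin n, k ≠ l → c k ≠ c l := by
    intro k l hkl heq
    have hmap : Finsupp.mapDomain (⇑(Equiv.swap k l)) c = c := by
      rw [← Finsupp.equivMapDomain_eq_mapDomain]
      ext a
      rw [Finsupp.equivMapDomain_apply, Equiv.symm_swap, Equiv.swap_apply_def]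
      split_ifs with h1 h2
      · rw [h1, heq]
      · rw [h2, heq]
      · rfl
    have hcr := MvPolynomial.coeff_rename_mapDomain (⇑(Equiv.swap k l))
      (Equiv.injective _) P c
    rw [hmap, hswap k l hkl, MvPolynomial.coeff_neg] at hcr
    exact hcoeff (by linear_combination (-1/2 : ℂ) * hcr)
  have hpar : ∀ k l : Fin n, k ≠ l → Even (c k + c l) := by
    intro k l hkl
    have h1 := congrArg (coeff c) (hflip k l hkl)
    rw [coeff_sflip, prod_pair_pow k l hkl (fun i => c i)] at h1
    have h2 : ((-1 : ℂ)) ^ (c k + c l) = 1 :=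
      mul_right_cancel₀ hcoeff (h1.trans (one_mul (coeff c P)).symm)
    exact (neg_one_pow_eq_one_iff_even (by norm_num : (-1 : ℂ) ≠ 1)).mp h2
  have hinj : Function.Injective (fun i : Fin n => c i / 2) := by
    intro i j hij
    by_contra hne
    have hne' : c i ≠ c j := hdist i j hne
    have hp := hpar i j hne
    rw [Nat.even_add, Nat.even_iff, Nat.even_iff] at hp
    simp only at hij
    omega
  have hsum1 : ∑ i ∈ Finset.range n, i ≤ ∑ i : Fin n, c i / 2 :=
    sum_injective_ge _ hinj
  have hsum2 : ∑ i : Fin n, 2 * (c i / 2) ≤ ∑ i : Fin n, c i :=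
    Finset.sum_le_sum fun i _ => by omega
  have hsum3 : (c.sum fun _ e => e) ≤ P.totalDegree := MvPolynomial.le_totalDegree hc
  have hsum4 : (c.sum fun _ e => e) = ∑ i : Fin n, c i :=
    Finsupp.sum_fintype _ _ fun _ => rfl
  have hgauss : (∑ i ∈ Finset.range n, i) * 2 = n * (n - 1) := Finset.sum_range_id_mul_two n
  have hmul : ∑ i : Fin n, 2 * (c i / 2) = 2 * ∑ i : Fin n, c i / 2 := by
    rw [Finset.mul_sum]
  omega


def sg {n : ℕ} (ε : Fin n → Bool) : Fin n → ℂ := fun i => if ε i then -1 else 1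

lemma eval_sflip {n : ℕ} (s x : Fin n → ℂ) (q : MvPolynomial (Fin n) ℂ) :
    eval x (sflip s q) = eval (fun i => s i * x i) q := by
  have h : (eval x).comp ((sflip s) : MvPolynomial (Fin n) ℂ →ₐ[ℂ] _).toRingHom
      = eval (fun i => s i * x i) := by
    apply MvPolynomial.ringHom_ext
    · intro r; simp [sflip]
    · intro i; simp [sflip]
  exact RingHom.congr_fun h q

lemma main_aux {n : ℕ} (f : MvPolynomial (Fin n) ℂ) (hsym : f.IsSymmetric)
    (hdeg : f.totalDegree < n.choose 2)
    (E : Finset (Fin n → Bool)) (hE : ∀ ε, ε ∈ E ↔ ∏ i, sg ε i = 1) :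
    ∑ ε ∈ E, sflip (sg ε) (f * Vdm n) = 0 := by
  apply key_vanish
  · -- antisymmetry under swaps
    intro k l hkl
    rw [map_sum]
    have hterm : ∀ ε : Fin n → Bool,
        rename (⇑(Equiv.swap k l)) (sflip (sg ε) (f * Vdm n))
        = -(sflip (sg (ε ∘ ⇑(Equiv.swap k l))) (f * Vdm n)) := by
      intro ε
      rw [rename_sflip]
      have h1 : rename (⇑(Equiv.swap k l)) (f * Vdm n) = -(f * Vdm n) := by
        rw [map_mul, hsym (Equiv.swap k l), rename_swap_Vdm k l hkl, mul_neg]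
      have h2 : (fun i => sg ε ((Equiv.swap k l).symm i))
          = sg (ε ∘ ⇑(Equiv.swap k l)) := by
        funext i
        simp [sg, Equiv.symm_swap, Function.comp]
        rfl
      rw [h1, h2, map_neg]
    calc ∑ ε ∈ E, rename (⇑(Equiv.swap k l)) (sflip (sg ε) (f * Vdm n))
        = ∑ ε ∈ E, -(sflip (sg (ε ∘ ⇑(Equiv.swap k l))) (f * Vdm n)) :=
          Finset.sum_congr rfl fun ε _ => hterm ε
      _ = -∑ ε ∈ E, sflip (sg (ε ∘ ⇑(Equiv.swap k l))) (f * Vdm n) :=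
          Finset.sum_neg_distrib _
      _ = -∑ ε ∈ E, sflip (sg ε) (f * Vdm n) := by
          refine congrArg Neg.neg ?_
          refine Finset.sum_nbij' (fun ε => ε ∘ ⇑(Equiv.swap k l))
            (fun ε => ε ∘ ⇑(Equiv.swap k l)) ?_ ?_ ?_ ?_ ?_
          · intro ε hε
            rw [hE] at hε ⊢
            rw [← hε]
            exact Equiv.prod_comp (Equiv.swap k l) (sg ε)
          · intro ε hε
            rw [hE] at hε ⊢
            rw [← hε]
            exact Equiv.prod_comp (Equiv.swap k l) (sg ε)
          · intro ε _
            funext a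
            exact congrArg ε (Equiv.swap_apply_self k l a)
          · intro ε _
            funext a
            exact congrArg ε (Equiv.swap_apply_self k l a)
          · intro ε _
            rfl
  · -- invariance under even sign flips
    intro k l hkl
    rw [map_sum]
    have hterm : ∀ ε : Fin n → Bool,
        sflip (fun i => if i = k ∨ i = l then (-1 : ℂ) else 1) (sflip (sg ε) (f * Vdm n))
        = sflip (sg (fun i => Bool.xor (decide (i = k ∨ i = l)) (ε i))) (f * Vdm n) := by
      intro ε
      rw [sflip_comp]
      have hfun : (fun i => sg ε i * (if i = k ∨ i = l then (-1 : ℂ) else 1))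
          = sg (fun i => Bool.xor (decide (i = k ∨ i = l)) (ε i)) := by
        funext i
        by_cases hik : i = k ∨ i = l <;> cases hε : ε i <;> simp [sg, hik, hε]
      rw [hfun]
    have hδ1 : ∏ i : Fin n, sg (fun i => decide (i = k ∨ i = l)) i = 1 := by
      have h := prod_pair_pow k l hkl (fun _ => 1)
      simp only [pow_one] at h
      rw [show (fun i : Fin n => sg (fun i => decide (i = k ∨ i = l)) i)
          = fun i => if i = k ∨ i = l then (-1 : ℂ) else 1 by
        funext i; by_cases hik : i = k ∨ i = l <;> simp [sg, hik]]
      rw [h]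
      norm_num
    have hmul : ∀ ε : Fin n → Bool, ∀ i : Fin n,
        sg (fun i => Bool.xor (decide (i = k ∨ i = l)) (ε i)) i
        = sg (fun i => decide (i = k ∨ i = l)) i * sg ε i := by
      intro ε i
      by_cases hik : i = k ∨ i = l <;> cases hε : ε i <;> simp [sg, hik, hε]
    calc ∑ ε ∈ E, sflip (fun i => if i = k ∨ i = l then (-1 : ℂ) else 1)
          (sflip (sg ε) (f * Vdm n))
        = ∑ ε ∈ E, sflip (sg (fun i => Bool.xor (decide (i = k ∨ i = l)) (ε i))) (f * Vdm n) :=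
          Finset.sum_congr rfl fun ε _ => hterm ε
      _ = ∑ ε ∈ E, sflip (sg ε) (f * Vdm n) := by
          refine Finset.sum_nbij' (fun ε => fun i => Bool.xor (decide (i = k ∨ i = l)) (ε i))
            (fun ε => fun i => Bool.xor (decide (i = k ∨ i = l)) (ε i)) ?_ ?_ ?_ ?_ ?_
          · intro ε hε
            rw [hE] at hε ⊢
            calc ∏ i, sg (fun i => Bool.xor (decide (i = k ∨ i = l)) (ε i)) i
                = ∏ i, (sg (fun i => decide (i = k ∨ i = l)) i * sg ε i) :=
                  Finset.prod_congr rfl fun i _ => hmul ε i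
              _ = (∏ i, sg (fun i => decide (i = k ∨ i = l)) i) * ∏ i, sg ε i :=
                  Finset.prod_mul_distrib
              _ = 1 := by rw [hδ1, hε, one_mul]
          · intro ε hε
            rw [hE] at hε ⊢
            calc ∏ i, sg (fun i => Bool.xor (decide (i = k ∨ i = l)) (ε i)) i
                = ∏ i, (sg (fun i => decide (i = k ∨ i = l)) i * sg ε i) :=
                  Finset.prod_congr rfl fun i _ => hmul ε i
              _ = (∏ i, sg (fun i => decide (i = k ∨ i = l)) i) * ∏ i, sg ε i :=
                  Finset.prod_mul_distrib
              _ = 1 := by rw [hδ1, hε, one_mul]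
          · intro ε _
            funext a
            cases hd : decide (a = k ∨ a = l) <;> cases hεa : ε a <;> simp [hd, hεa]
          · intro ε _
            funext a
            cases hd : decide (a = k ∨ a = l) <;> cases hεa : ε a <;> simp [hd, hεa]
          · intro ε _
            rfl
  · -- degree bound
    have hn2 : 2 ≤ n := by
      by_contra h
      push_neg at h
      have h0 : n.choose 2 = 0 := Nat.choose_eq_zero_of_lt (by omega)
      omega
    have hone : ∀ i j : Fin n, (X j - X i : MvPolynomial (Fin n) ℂ).totalDegree ≤ 1 := by
      intro i j
      rw [sub_eq_add_neg]
      refine le_trans (totalDegree_add _ _) ?_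
      rw [totalDegree_neg, totalDegree_X, totalDegree_X]
      simp
    have hV : (Vdm n).totalDegree ≤ ∑ i ∈ Finset.range n, i := by
      refine le_trans (totalDegree_finset_prod _ _) ?_
      have h1 : ∀ i : Fin n,
          (∏ j ∈ Finset.Ioi i, (X j - X i : MvPolynomial (Fin n) ℂ)).totalDegree
            ≤ n - 1 - (i : ℕ) := by
        intro i
        refine le_trans (totalDegree_finset_prod _ _) ?_
        refine le_trans (Finset.sum_le_sum fun j _ => hone i j) ?_
        simp [Fin.card_Ioi]
      refine le_trans (Finset.sum_le_sum fun i _ => h1 i) ?_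
      rw [Fin.sum_univ_eq_sum_range (fun i => n - 1 - i) n]
      exact le_of_eq (Finset.sum_range_reflect (fun i => i) n)
    have hQ : (f * Vdm n).totalDegree ≤ f.totalDegree + ∑ i ∈ Finset.range n, i :=
      le_trans (totalDegree_mul _ _) (add_le_add le_rfl hV)
    have hsum : (∑ ε ∈ E, sflip (sg ε) (f * Vdm n)).totalDegree
        ≤ f.totalDegree + ∑ i ∈ Finset.range n, i := by
      refine le_trans (totalDegree_finset_sum _ _) ?_
      exact Finset.sup_le fun ε _ => le_trans (totalDegree_sflip_le _ _) hQ
    have hgauss := Finset.sum_range_id_mul_two n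
    have hch : n.choose 2 = n * (n - 1) / 2 := Nat.choose_two_right n
    refine lt_of_le_of_lt hsum ?_
    omega

end OGrAux



/-- let `y₁,…,yₙ` be pairwise distinct nonzero complex numbers
with `yᵢ + yⱼ ≠ 0` for `i ≠ j`, and let `f` be a polynomial in `n` variables
invariant under permutations and under even sign changes of the variables, with
`deg f < n(n-1)/2 = C(n,2)`.  Then the sum over the `2^{n-1}` sign vectors
`ε ∈ {±1}ⁿ` with `∏ εᵢ = 1` of
`f(ε₁y₁,…,εₙyₙ) / ∏_{i<j}(εᵢyᵢ + εⱼyⱼ)` vanishes.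
(A sign vector is encoded by `ε : Fin n → Bool`, with sign `-1` at `i` iff `ε i`.) -/
theorem OGr_equivariant_pairing_vanishing (n : ℕ) (y : Fin n → ℂ)
    (hy : Function.Injective y) (hy0 : ∀ i, y i ≠ 0)
    (hysum : ∀ i j, i ≠ j → y i + y j ≠ 0)
    (f : MvPolynomial (Fin n) ℂ)
    (hsym : f.IsSymmetric)
    (hsign : ∀ ε : Fin n → ℂ, (∀ i, ε i = 1 ∨ ε i = -1) → ∏ i, ε i = 1 →
      MvPolynomial.aeval (fun i => MvPolynomial.C (ε i) * MvPolynomial.X i) f = f)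
    (hdeg : f.totalDegree < Nat.choose n 2) :
    ∑ ε ∈ Finset.univ.filter
        (fun ε : Fin n → Bool => ∏ i, (if ε i then (-1 : ℂ) else 1) = 1),
      MvPolynomial.eval (fun i => (if ε i then (-1 : ℂ) else 1) * y i) f /
        ∏ i : Fin n, ∏ j ∈ Finset.Ioi i,
          ((if ε i then (-1 : ℂ) else 1) * y i + (if ε j then (-1 : ℂ) else 1) * y j)
      = 0 := by
  classical
  set E := Finset.univ.filter
      (fun ε : Fin n → Bool => ∏ i, (if ε i then (-1 : ℂ) else 1) = 1) with hEdef
  have hEmem : ∀ ε : Fin n → Bool, ε ∈ E ↔ ∏ i, OGrAux.sg ε i = 1 := by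
    intro ε
    rw [hEdef, Finset.mem_filter]
    simp [OGrAux.sg]
  have key := OGrAux.main_aux f hsym hdeg E hEmem
  set V := ∏ i : Fin n, ∏ j ∈ Finset.Ioi i, (y j ^ 2 - y i ^ 2) with hVdef
  have hV : V ≠ 0 := by
    rw [hVdef]
    rw [Finset.prod_ne_zero_iff]
    intro i _
    rw [Finset.prod_ne_zero_iff]
    intro j hj
    have hij : i < j := Finset.mem_Ioi.mp hj
    have h1 : y j - y i ≠ 0 := sub_ne_zero.mpr (fun h => hij.ne' (hy h))
    have h2 : y j + y i ≠ 0 := hysum j i (fun h => hij.ne' h)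
    have h3 : y j ^ 2 - y i ^ 2 = (y j - y i) * (y j + y i) := by ring
    rw [h3]
    exact mul_ne_zero h1 h2
  have hfac : ∀ ε : Fin n → Bool,
      (∏ i : Fin n, ∏ j ∈ Finset.Ioi i,
          (OGrAux.sg ε i * y i + OGrAux.sg ε j * y j)) *
        MvPolynomial.eval (fun i => OGrAux.sg ε i * y i) (OGrAux.Vdm n) = V := by
    intro ε
    have hsq : ∀ i, OGrAux.sg ε i * OGrAux.sg ε i = 1 := by
      intro i
      cases h : ε i <;> simp [OGrAux.sg, h]
    have hev : MvPolynomial.eval (fun i => OGrAux.sg ε i * y i) (OGrAux.Vdm n)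
        = ∏ i : Fin n, ∏ j ∈ Finset.Ioi i,
            (OGrAux.sg ε j * y j - OGrAux.sg ε i * y i) := by
      rw [OGrAux.Vdm]
      simp
    rw [hev, ← Finset.prod_mul_distrib]
    rw [hVdef]
    refine Finset.prod_congr rfl fun i _ => ?_
    rw [← Finset.prod_mul_distrib]
    refine Finset.prod_congr rfl fun j _ => ?_
    linear_combination y j ^ 2 * hsq j - y i ^ 2 * hsq i
  have hgoal : ∀ ε : Fin n → Bool,
      MvPolynomial.eval (fun i => (if ε i then (-1 : ℂ) else 1) * y i) f /
        (∏ i : Fin n, ∏ j ∈ Finset.Ioi i,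
          ((if ε i then (-1 : ℂ) else 1) * y i + (if ε j then (-1 : ℂ) else 1) * y j))
      = MvPolynomial.eval y (OGrAux.sflip (OGrAux.sg ε) (f * OGrAux.Vdm n)) / V := by
    intro ε
    have hf := hfac ε
    have hne : MvPolynomial.eval (fun i => OGrAux.sg ε i * y i) (OGrAux.Vdm n) ≠ 0 := by
      intro h
      rw [h, mul_zero] at hf
      exact hV hf.symm
    show MvPolynomial.eval (fun i => OGrAux.sg ε i * y i) f /
        (∏ i : Fin n, ∏ j ∈ Finset.Ioi i,
          (OGrAux.sg ε i * y i + OGrAux.sg ε j * y j)) = _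
    rw [OGrAux.eval_sflip, map_mul, ← hf, mul_div_mul_right _ _ hne]
  calc ∑ ε ∈ E,
        MvPolynomial.eval (fun i => (if ε i then (-1 : ℂ) else 1) * y i) f /
          ∏ i : Fin n, ∏ j ∈ Finset.Ioi i,
            ((if ε i then (-1 : ℂ) else 1) * y i + (if ε j then (-1 : ℂ) else 1) * y j)
      = ∑ ε ∈ E, MvPolynomial.eval y (OGrAux.sflip (OGrAux.sg ε) (f * OGrAux.Vdm n)) / V :=
        Finset.sum_congr rfl fun ε _ => hgoal ε
    _ = (∑ ε ∈ E, MvPolynomial.eval y (OGrAux.sflip (OGrAux.sg ε) (f * OGrAux.Vdm n))) / V :=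
        (Finset.sum_div _ _ _).symm
    _ = 0 := by rw [← map_sum, key, map_zero, zero_div]
end
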